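/- arXiv:1201.1540 — 7 statements merged into one kernel-verified Lean document; each statement's English description precedes it below -/
import Mathlib

section
/- Let β > 0 be fixed. For each n let Λ_n > 0 and N_n be a positive integer, and suppose Λ_n → ∞ and N_n/Λ_n → ∞ as n → ∞. Let C > 0 and for each n let ε^{(n)} : {1,2,...} → ℝ be a sequence satisfying |ε^{(n)}_k − π²k²/Λ_n²| ≤ C for all k ≥ 1. Define the canonical partition functions Z_n^{(V)} = Σ_{0<k_1<k_2<...<k_{N_n}} exp(−β Σ_{i=1}^{N_n} ε^{(n)}_{k_i}) and Z_n^{(0)} = Σ_{0<k_1<k_2<...<k_{N_n}} exp(−β Σ_{i=1}^{N_n} π²k_i²/Λ_n²), both sums running over strictly increasing N_n-tuples of positive integers. Then (ln Z_n^{(V)})/(ln Z_n^{(0)}) → 1 as n → ∞. -/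
/-!
Shifting each level by at most `C` changes the Boltzmann factor of an `N`-particle configuration
by a factor between `e^{-βCN}` and `e^{βCN}`, so `|ln Z^{(V)} - ln Z^{(0)}| ≤ βCN`. For the free
levels, `N` distinct positive integers satisfy `∑ k² ≥ N³/3`; spending half of `β` on this bound
and the other half on `Z_N ≤ ∏_k (1 + e^{-βε_k/2}) ≤ exp (∑_k e^{-βε_k/2})` gives
`ln Z^{(0)} ≤ -βπ²N³/(6Λ²) + O(Λ)`. As `N/Λ → ∞`, `|ln Z^{(0)}|/N → ∞`, whence the ratio
tends to `1`.
-/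

open Real Filter

/-- Canonical partition function of `N` independent Fermi particles with one-particle
eigenvalues `ε`: the sum over strictly increasing `N`-tuples of positive integers,
i.e. over finite sets of positive integers of cardinality `N`. -/
noncomputable def canonicalZ (β : ℝ) (N : ℕ) (ε : ℕ+ → ℝ) : ℝ :=
  ∑' s : {s : Finset ℕ+ // s.card = N}, Real.exp (-β * ∑ k ∈ s.1, ε k)

open Finset

lemma card_pow_three_le_three_mul_sum_sq (s : Finset ℕ+) :
    #s ^ 3 ≤ 3 * ∑ k ∈ s, (k : ℕ) ^ 2 := by
  induction s using Finset.induction_on_max with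
  | empty => simp
  | insert a s hlt ih =>
    have ha : a ∉ s := fun h => (hlt a h).false
    have hcard : #s + 1 ≤ a := by
      have : #s ≤ #(Ico 1 a) := card_le_card fun x hx => mem_Ico.2 ⟨one_le, hlt x hx⟩
      rw [PNat.card_Ico, PNat.one_coe] at this
      have := a.pos
      omega
    rw [card_insert_of_notMem ha, sum_insert ha]
    nlinarith [Nat.pow_le_pow_left hcard 2]

noncomputable def canonicalWeight (β : ℝ) (N : ℕ) (ε : ℕ+ → ℝ)
    (s : {s : Finset ℕ+ // #s = N}) : ℝ :=
  exp (-β * ∑ k ∈ s.1, ε k)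

lemma canonicalZ_eq_tsum (β : ℝ) (N : ℕ) (ε : ℕ+ → ℝ) :
    canonicalZ β N ε = ∑' s, canonicalWeight β N ε s := rfl

lemma canonicalWeight_eq_prod (β : ℝ) (N : ℕ) (ε : ℕ+ → ℝ) (s : {s : Finset ℕ+ // #s = N}) :
    canonicalWeight β N ε s = ∏ k ∈ s.1, exp (-β * ε k) := by
  rw [canonicalWeight, mul_sum, exp_sum]

lemma canonicalZ_pos {β : ℝ} {N : ℕ} {ε : ℕ+ → ℝ} (h : Summable (canonicalWeight β N ε)) :
    0 < canonicalZ β N ε := by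
  obtain ⟨s, hs⟩ := Infinite.exists_subset_card_eq ℕ+ N
  exact h.tsum_pos (fun _ => (exp_pos _).le) ⟨s, hs⟩ (exp_pos _)

lemma tsum_finsetProd_le_exp_tsum {ι : Type*} {y : ι → ℝ} (hy : ∀ i, 0 ≤ y i)
    (hsum : Summable y) : ∑' s : Finset ι, ∏ i ∈ s, y i ≤ exp (∑' i, y i) := by
  classical
  refine Real.tsum_le_of_sum_le (fun s => prod_nonneg fun i _ => hy i) fun T => ?_
  calc ∑ s ∈ T, ∏ i ∈ s, y i
      ≤ ∑ s ∈ (T.biUnion id).powerset, ∏ i ∈ s, y i :=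
        sum_le_sum_of_subset_of_nonneg (fun s hs => mem_powerset.2 (subset_biUnion_of_mem id hs))
          fun s _ _ => prod_nonneg fun i _ => hy i
    _ = ∏ i ∈ T.biUnion id, (1 + y i) := (prod_one_add _).symm
    _ ≤ exp (∑ i ∈ T.biUnion id, y i) := prod_one_add_le_exp_sum _ hy
    _ ≤ exp (∑' i, y i) := exp_le_exp.2 (hsum.sum_le_tsum _ fun i _ => hy i)

section GrandCanonicalBound

variable {β : ℝ} {N : ℕ} {ε : ℕ+ → ℝ}

lemma summable_canonicalWeight (h : Summable fun k => exp (-β * ε k)) :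
    Summable (canonicalWeight β N ε) := by
  simp_rw [funext (canonicalWeight_eq_prod β N ε)]
  exact (summable_finsetProd_of_summable_nonneg (fun _ => (exp_pos _).le) h).comp_injective
    Subtype.val_injective

lemma canonicalZ_le_exp_tsum (h : Summable fun k => exp (-β * ε k)) :
    canonicalZ β N ε ≤ exp (∑' k, exp (-β * ε k)) := by
  have hprod := summable_finsetProd_of_summable_nonneg (fun _ => (exp_pos _).le) h
  calc canonicalZ β N ε = ∑' s : {s : Finset ℕ+ // #s = N}, ∏ k ∈ s.1, exp (-β * ε k) := by
        simp_rw [canonicalZ_eq_tsum, canonicalWeight_eq_prod]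
    _ ≤ ∑' s : Finset ℕ+, ∏ k ∈ s, exp (-β * ε k) :=
        hprod.tsum_subtype_le _ _ fun _ => prod_nonneg fun _ _ => (exp_pos _).le
    _ ≤ exp (∑' k, exp (-β * ε k)) := tsum_finsetProd_le_exp_tsum (fun _ => (exp_pos _).le) h

end GrandCanonicalBound

lemma abs_log_sub_le_of_le_exp_mul {x y c : ℝ} (hx : 0 < x) (hy : 0 < y)
    (hxy : x ≤ exp c * y) (hyx : y ≤ exp c * x) : |log x - log y| ≤ c := by
  have h₁ := log_le_log hx hxy
  have h₂ := log_le_log hy hyx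
  rw [log_mul (exp_ne_zero c) hy.ne', log_exp] at h₁
  rw [log_mul (exp_ne_zero c) hx.ne', log_exp] at h₂
  exact abs_sub_le_iff.2 ⟨by linarith, by linarith⟩

section Perturbation

variable {β C : ℝ} {N : ℕ} {ε ε' : ℕ+ → ℝ}

lemma canonicalWeight_le_exp_mul (hβ : 0 ≤ β) (hε : ∀ k, |ε k - ε' k| ≤ C)
    (s : {s : Finset ℕ+ // #s = N}) :
    canonicalWeight β N ε s ≤ exp (β * C * N) * canonicalWeight β N ε' s := by
  have hsum : ∑ k ∈ s.1, ε' k - ∑ k ∈ s.1, ε k ≤ C * N := by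
    calc ∑ k ∈ s.1, ε' k - ∑ k ∈ s.1, ε k = ∑ k ∈ s.1, (ε' k - ε k) := (sum_sub_distrib ..).symm
      _ ≤ ∑ _k ∈ s.1, C := sum_le_sum fun k _ => (abs_sub_comm (ε k) _ ▸ hε k |> abs_le.1).2
      _ = C * N := by rw [sum_const, s.2, nsmul_eq_mul, mul_comm]
  rw [canonicalWeight, canonicalWeight, ← exp_add]
  exact exp_le_exp.2 (by nlinarith)

lemma canonicalZ_le_exp_mul (hβ : 0 ≤ β) (hε : ∀ k, |ε k - ε' k| ≤ C)
    (h' : Summable (canonicalWeight β N ε')) :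
    Summable (canonicalWeight β N ε) ∧
      canonicalZ β N ε ≤ exp (β * C * N) * canonicalZ β N ε' := by
  have hle := canonicalWeight_le_exp_mul (N := N) hβ hε
  have h : Summable (canonicalWeight β N ε) :=
    .of_nonneg_of_le (fun _ => (exp_pos _).le) hle (h'.mul_left _)
  refine ⟨h, ?_⟩
  rw [canonicalZ_eq_tsum, canonicalZ_eq_tsum, ← tsum_mul_left]
  exact h.tsum_le_tsum hle (h'.mul_left _)

lemma abs_log_canonicalZ_sub_le (hβ : 0 ≤ β) (hε : ∀ k, |ε k - ε' k| ≤ C)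
    (h' : Summable (canonicalWeight β N ε')) :
    |log (canonicalZ β N ε) - log (canonicalZ β N ε')| ≤ β * C * N := by
  obtain ⟨h, hle⟩ := canonicalZ_le_exp_mul hβ hε h'
  have hge := (canonicalZ_le_exp_mul hβ (fun k => abs_sub_comm (ε k) (ε' k) ▸ hε k) h).2
  exact abs_log_sub_le_of_le_exp_mul (canonicalZ_pos h) (canonicalZ_pos h') hle hge

end Perturbation

lemma exp_neg_sq_le_mul_exp_neg_pow (a : ℝ) (k : ℕ) :
    exp (-(a * k) ^ 2) ≤ exp (1 / 4) * exp (-a) ^ k := by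
  rw [← exp_nat_mul, ← exp_add]
  exact exp_le_exp.2 (by nlinarith [sq_nonneg (a * k - 1 / 2)])

lemma tsum_geometric_succ_exp_neg_le {a : ℝ} (ha : 0 < a) :
    ∑' n : ℕ, exp (-a) ^ (n + 1) ≤ a⁻¹ := by
  have hr : exp (-a) < 1 := exp_lt_one_iff.2 (by linarith)
  have hr' : exp (-a) * (1 + a) ≤ 1 := by
    rw [exp_neg]
    exact inv_mul_le_one_of_le₀ (by linarith [add_one_le_exp a]) (exp_pos a).le
  simp_rw [pow_succ']
  rw [tsum_mul_left, tsum_geometric_of_lt_one (exp_pos _).le hr, mul_inv_le_iff₀ (by linarith),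
    le_inv_mul_iff₀ ha]
  linarith

section Gaussian

variable {a : ℝ}

lemma summable_exp_neg_pow_pnat (ha : 0 < a) : Summable fun k : ℕ+ => exp (-a) ^ (k : ℕ) :=
  (summable_geometric_of_lt_one (exp_pos _).le (exp_lt_one_iff.2 (by linarith))).comp_injective
    PNat.coe_injective

lemma summable_exp_neg_sq (ha : 0 < a) : Summable fun k : ℕ+ => exp (-(a * (k : ℕ)) ^ 2) :=
  .of_nonneg_of_le (fun _ => (exp_pos _).le) (fun k => exp_neg_sq_le_mul_exp_neg_pow a k)
    ((summable_exp_neg_pow_pnat ha).mul_left _)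

lemma tsum_exp_neg_sq_le (ha : 0 < a) : ∑' k : ℕ+, exp (-(a * (k : ℕ)) ^ 2) ≤ exp (1 / 4) / a := by
  calc ∑' k : ℕ+, exp (-(a * (k : ℕ)) ^ 2) ≤ ∑' k : ℕ+, exp (1 / 4) * exp (-a) ^ (k : ℕ) :=
        (summable_exp_neg_sq ha).tsum_le_tsum (fun k => exp_neg_sq_le_mul_exp_neg_pow a k)
          ((summable_exp_neg_pow_pnat ha).mul_left _)
    _ = exp (1 / 4) * ∑' n : ℕ, exp (-a) ^ (n + 1) := by
        rw [tsum_mul_left, tsum_pnat_eq_tsum_succ (f := fun n => exp (-a) ^ n)]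
    _ ≤ exp (1 / 4) / a := by
        rw [div_eq_mul_inv]
        exact mul_le_mul_of_nonneg_left (tsum_geometric_succ_exp_neg_le ha) (exp_pos _).le

end Gaussian

noncomputable def dirichletEigenvalue (Λ : ℝ) (k : ℕ+) : ℝ := π ^ 2 * (k : ℕ) ^ 2 / Λ ^ 2

section Dirichlet

variable {β Λ : ℝ} {N : ℕ}

lemma exp_neg_mul_dirichletEigenvalue (hβ : 0 ≤ β) (k : ℕ+) :
    exp (-β * dirichletEigenvalue Λ k) = exp (-(π * √β / Λ * (k : ℕ)) ^ 2) := by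
  rw [dirichletEigenvalue, div_mul_eq_mul_div, div_pow, mul_pow, mul_pow, sq_sqrt hβ]
  ring_nf

lemma summable_exp_neg_mul_dirichletEigenvalue (hβ : 0 < β) (hΛ : 0 < Λ) :
    Summable fun k => exp (-β * dirichletEigenvalue Λ k) := by
  simp_rw [exp_neg_mul_dirichletEigenvalue hβ.le]
  exact summable_exp_neg_sq (by positivity)

lemma canonicalWeight_dirichlet_le (hβ : 0 ≤ β) (s : {s : Finset ℕ+ // #s = N}) :
    canonicalWeight β N (dirichletEigenvalue Λ) s ≤
      exp (-(β * π ^ 2 / 6) * N ^ 3 / Λ ^ 2) *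
        canonicalWeight (β / 2) N (dirichletEigenvalue Λ) s := by
  have hcube : (N : ℝ) ^ 3 ≤ 3 * ∑ k ∈ s.1, ((k : ℕ) : ℝ) ^ 2 := by
    have := card_pow_three_le_three_mul_sum_sq s.1
    rw [s.2] at this
    exact_mod_cast this
  have hsum : ∑ k ∈ s.1, dirichletEigenvalue Λ k =
      π ^ 2 / Λ ^ 2 * ∑ k ∈ s.1, ((k : ℕ) : ℝ) ^ 2 := by
    rw [mul_sum]; exact sum_congr rfl fun k _ => by rw [dirichletEigenvalue]; ring
  rw [canonicalWeight, canonicalWeight, ← exp_add, hsum]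
  refine exp_le_exp.2 ?_
  have : 0 ≤ β * π ^ 2 / Λ ^ 2 := by positivity
  linear_combination mul_le_mul_of_nonneg_left hcube this / 6

lemma log_canonicalZ_dirichlet_le (hβ : 0 < β) (hΛ : 0 < Λ) :
    log (canonicalZ β N (dirichletEigenvalue Λ)) ≤
      -(β * π ^ 2 / 6) * N ^ 3 / Λ ^ 2 + exp (1 / 4) / (π * √(β / 2)) * Λ := by
  set X := -(β * π ^ 2 / 6) * N ^ 3 / Λ ^ 2
  have hhalf := summable_exp_neg_mul_dirichletEigenvalue (half_pos hβ) hΛ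
  have hZ : canonicalZ β N (dirichletEigenvalue Λ) ≤
      exp X * canonicalZ (β / 2) N (dirichletEigenvalue Λ) := by
    rw [canonicalZ_eq_tsum, canonicalZ_eq_tsum, ← tsum_mul_left]
    exact (summable_canonicalWeight (summable_exp_neg_mul_dirichletEigenvalue hβ hΛ)).tsum_le_tsum
      (canonicalWeight_dirichlet_le hβ.le) ((summable_canonicalWeight hhalf).mul_left _)
  have hZhalf : canonicalZ (β / 2) N (dirichletEigenvalue Λ) ≤
      exp (exp (1 / 4) / (π * √(β / 2)) * Λ) := by
    refine (canonicalZ_le_exp_tsum hhalf).trans (exp_le_exp.2 ?_)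
    simp_rw [exp_neg_mul_dirichletEigenvalue (half_pos hβ).le]
    refine (tsum_exp_neg_sq_le (by positivity)).trans_eq ?_
    field_simp
  rw [log_le_iff_le_exp (canonicalZ_pos (summable_canonicalWeight
    (summable_exp_neg_mul_dirichletEigenvalue hβ hΛ))), exp_add]
  exact hZ.trans (mul_le_mul_of_nonneg_left hZhalf (exp_pos _).le)

end Dirichlet

lemma tendsto_div_of_abs_sub_le {ι : Type*} {l : Filter ι} {f g u : ι → ℝ} (K : ℝ)
    (hfg : ∀ᶠ i in l, |f i - g i| ≤ K * u i) (hg : Tendsto (fun i => |g i| / u i) l atTop) :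
    Tendsto (fun i => f i / g i) l (nhds 1) := by
  have hlim : Tendsto (fun i => K * (|g i| / u i)⁻¹) l (nhds 0) := by
    simpa using hg.inv_tendsto_atTop.const_mul K
  refine tendsto_iff_dist_tendsto_zero.2 (squeeze_zero' (.of_forall fun _ => dist_nonneg) ?_ hlim)
  filter_upwards [hfg, hg.eventually_gt_atTop 0] with i hfgi hgi
  have hu : 0 < u i := by
    by_contra! h; exact (div_nonpos_of_nonneg_of_nonpos (abs_nonneg _) h).not_gt hgi
  have hg0 : 0 < |g i| := by
    by_contra! h; exact (div_nonpos_of_nonpos_of_nonneg h hu.le).not_gt hgi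
  rw [dist_eq, div_sub_one (abs_pos.1 hg0), abs_div, inv_div, ← mul_div_assoc]
  exact div_le_div_of_nonneg_right hfgi hg0.le

theorem stmt_0_general (β : ℝ) (hβ : 0 < β) (Λ : ℕ → ℝ) (N : ℕ → ℕ)
    (hΛpos : ∀ n, 0 < Λ n)
    (hρ : Tendsto (fun n => (N n : ℝ) / Λ n) atTop atTop)
    (C : ℝ) (ε : ℕ → ℕ+ → ℝ)
    (hε : ∀ n, ∀ k : ℕ+, |ε n k - π ^ 2 * (k : ℕ) ^ 2 / (Λ n) ^ 2| ≤ C) :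
    Tendsto (fun n =>
        Real.log (canonicalZ β (N n) (ε n)) /
        Real.log (canonicalZ β (N n) (fun k => π ^ 2 * (k : ℕ) ^ 2 / (Λ n) ^ 2)))
      atTop (nhds 1) := by
  set c := exp (1 / 4) / (π * √(β / 2))
  refine tendsto_div_of_abs_sub_le (β * C) (u := fun n => (N n : ℝ)) (.of_forall fun n =>
    abs_log_canonicalZ_sub_le (ε' := dirichletEigenvalue (Λ n)) hβ.le (hε n)
      (summable_canonicalWeight (summable_exp_neg_mul_dirichletEigenvalue hβ (hΛpos n)))) ?_
  have hlower : ∀ᶠ n in atTop, β * π ^ 2 / 6 * ((N n : ℝ) / Λ n) ^ 2 - c * ((N n : ℝ) / Λ n)⁻¹ ≤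
      |log (canonicalZ β (N n) (dirichletEigenvalue (Λ n)))| / N n := by
    filter_upwards [hρ.eventually_gt_atTop 0] with n hn
    have hΛ := hΛpos n
    have hN : (0 : ℝ) < N n := (div_pos_iff_of_pos_right hΛ).1 hn
    have := log_canonicalZ_dirichlet_le (N := N n) hβ hΛ
    rw [le_div_iff₀ hN]
    calc (β * π ^ 2 / 6 * ((N n : ℝ) / Λ n) ^ 2 - c * ((N n : ℝ) / Λ n)⁻¹) * N n
        = -(-(β * π ^ 2 / 6) * N n ^ 3 / Λ n ^ 2 + c * Λ n) := by field_simp; ring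
      _ ≤ _ := (neg_le_neg this).trans (neg_le_abs _)
  refine tendsto_atTop_mono' _ hlower ?_
  exact (((tendsto_pow_atTop two_ne_zero).comp hρ).const_mul_atTop (by positivity)).atTop_add
    (by simpa using (tendsto_inv_atTop_zero.comp hρ).const_mul (-c))

/-- Theorem 1 of the paper: if `|ε^{(n)}_k − π²k²/Λ_n²| ≤ C`, `Λ_n → ∞` and
`N_n/Λ_n → ∞`, then `ln Z_n^{(V)} / ln Z_n^{(0)} → 1`. -/
theorem stmt_0 (β : ℝ) (hβ : 0 < β) (Λ : ℕ → ℝ) (N : ℕ → ℕ)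
    (hΛpos : ∀ n, 0 < Λ n) (hNpos : ∀ n, 0 < N n)
    (hΛ : Tendsto Λ atTop atTop)
    (hρ : Tendsto (fun n => (N n : ℝ) / Λ n) atTop atTop)
    (C : ℝ) (hC : 0 < C) (ε : ℕ → ℕ+ → ℝ)
    (hε : ∀ n, ∀ k : ℕ+, |ε n k - π ^ 2 * (k : ℕ) ^ 2 / (Λ n) ^ 2| ≤ C) :
    Tendsto (fun n =>
        Real.log (canonicalZ β (N n) (ε n)) /
        Real.log (canonicalZ β (N n) (fun k => π ^ 2 * (k : ℕ) ^ 2 / (Λ n) ^ 2)))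
      atTop (nhds 1) :=
  stmt_0_general β hβ Λ N hΛpos hρ C ε hε
end

section
/- Let β > 0 and Λ > 0 be fixed, let C > 0, and let ε : {1,2,...} → ℝ be a sequence satisfying |ε_k − π²k²/Λ²| ≤ C for all k ≥ 1. Define ln Ξ_μ^{(V)} = Σ_{k=1}^∞ ln(1 + e^{β(μ−ε_k)}) and ln Ξ_μ^{(0)} = Σ_{k=1}^∞ ln(1 + e^{β(μ−π²k²/Λ²)}). Then (ln Ξ_μ^{(V)})/(ln Ξ_μ^{(0)}) → 1 as μ → ∞. -/
open Real Filter

/-- Logarithm of the grand canonical partition function of the Fermi gas with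
one-particle eigenvalues `ε` and chemical potential `μ`:
`ln Ξ_μ = Σ_{k=1}^∞ ln(1 + e^{β(μ−ε_k)})`. -/
noncomputable def lnXi (β μ : ℝ) (ε : ℕ+ → ℝ) : ℝ :=
  ∑' k : ℕ+, Real.log (1 + Real.exp (β * (μ - ε k)))

/-!
Write `G(μ)` for `lnXi` of the free eigenvalues `a k²`. The hypothesis sandwiches `lnXi β μ ε`
between `G(μ - C)` and `G(μ + C)`, so it suffices that `G(μ ± C) / G(μ) → 1`.
Since `x ↦ log (1 + eˣ)` grows by at most `c` over a step of length `c` and is at most `eˣ`,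
`G(μ + C) - G(μ)` is at most `βC` for each of the first `K ≍ √μ` modes plus a convergent
geometric tail, hence `O(√μ)`; on the other hand the first `≍ √μ` modes each contribute at least
`βμ / 2`, so `G(μ) ≳ μ^{3/2}`.
-/

namespace Real

lemma log_one_add_exp_pos (x : ℝ) : 0 < log (1 + exp x) :=
  log_pos (by linarith [exp_pos x])

lemma le_log_one_add_exp (x : ℝ) : x ≤ log (1 + exp x) := by
  calc x = log (exp x) := (log_exp x).symm
    _ ≤ log (1 + exp x) := log_le_log (exp_pos x) (by linarith)

lemma log_one_add_exp_le_exp (x : ℝ) : log (1 + exp x) ≤ exp x := by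
  linarith [log_le_sub_one_of_pos (add_pos one_pos (exp_pos x))]

lemma monotone_log_one_add_exp : Monotone fun x => log (1 + exp x) :=
  fun _ _ h => log_le_log (by positivity) (by gcongr)

lemma log_one_add_exp_add_le (x : ℝ) {c : ℝ} (hc : 0 ≤ c) :
    log (1 + exp (x + c)) ≤ log (1 + exp x) + c := by
  have h : 1 + exp (x + c) ≤ (1 + exp x) * exp c := by
    rw [exp_add]; nlinarith [one_le_exp hc, exp_pos x]
  calc log (1 + exp (x + c)) ≤ log ((1 + exp x) * exp c) := log_le_log (by positivity) h
    _ = log (1 + exp x) + c := by rw [log_mul (by positivity) (exp_pos c).ne', log_exp]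

end Real

section General

variable {β μ μ' C : ℝ} {ε ε' : ℕ+ → ℝ}

lemma summable_log_one_add_exp_of_summable_exp (μ : ℝ)
    (hε : Summable fun k => exp (-(β * ε k))) :
    Summable fun k => log (1 + exp (β * (μ - ε k))) := by
  refine (hε.mul_left (exp (β * μ))).of_nonneg_of_le (fun k => (log_one_add_exp_pos _).le)
    fun k => ?_
  rw [← exp_add]
  exact (log_one_add_exp_le_exp _).trans_eq (by ring_nf)

lemma lnXi_pos (μ : ℝ) (hε : Summable fun k => exp (-(β * ε k))) : 0 < lnXi β μ ε :=
  (summable_log_one_add_exp_of_summable_exp μ hε).tsum_pos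
    (fun _ => (log_one_add_exp_pos _).le) 1 (log_one_add_exp_pos _)

lemma lnXi_le_lnXi (hβ : 0 ≤ β) (h : ∀ k, μ - ε k ≤ μ' - ε' k)
    (hε : Summable fun k => exp (-(β * ε k))) (hε' : Summable fun k => exp (-(β * ε' k))) :
    lnXi β μ ε ≤ lnXi β μ' ε' :=
  (summable_log_one_add_exp_of_summable_exp μ hε).tsum_le_tsum
    (fun k => monotone_log_one_add_exp (mul_le_mul_of_nonneg_left (h k) hβ))
    (summable_log_one_add_exp_of_summable_exp μ' hε')

lemma summable_exp_neg_mul_of_le (hβ : 0 ≤ β) (h : ∀ k, ε' k - C ≤ ε k)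
    (hε' : Summable fun k => exp (-(β * ε' k))) : Summable fun k => exp (-(β * ε k)) := by
  refine (hε'.mul_left (exp (β * C))).of_nonneg_of_le (fun k => (exp_pos _).le) fun k => ?_
  rw [← exp_add]
  exact exp_le_exp.2 (by nlinarith [h k])

lemma lnXi_mem_Icc_of_abs_sub_le (hβ : 0 ≤ β) (h : ∀ k, |ε k - ε' k| ≤ C)
    (hε' : Summable fun k => exp (-(β * ε' k))) (μ : ℝ) :
    lnXi β μ ε ∈ Set.Icc (lnXi β (μ - C) ε') (lnXi β (μ + C) ε') := by
  have hε : Summable fun k => exp (-(β * ε k)) :=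
    summable_exp_neg_mul_of_le (C := C) hβ (fun k => by linarith [(abs_le.1 (h k)).1]) hε'
  exact ⟨lnXi_le_lnXi hβ (fun k => by linarith [(abs_le.1 (h k)).2]) hε' hε,
    lnXi_le_lnXi hβ (fun k => by linarith [(abs_le.1 (h k)).1]) hε hε'⟩

end General

lemma summable_exp_neg_mul_pnat {c : ℝ} (hc : 0 < c) :
    Summable fun k : ℕ+ => exp (-(c * (k : ℕ))) := by
  have h := (summable_exp_nat_mul_iff (a := -c)).2 (neg_lt_zero.2 hc)
  exact (h.comp_injective PNat.coe_injective).congr fun k => by simp [mul_comm]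

lemma exists_pnat_sq_mem_Icc {x : ℝ} (hx : 4 ≤ x) :
    ∃ n : ℕ+, x / 4 ≤ ((n : ℕ) : ℝ) ^ 2 ∧ ((n : ℕ) : ℝ) ^ 2 ≤ x := by
  have hs : 2 ≤ √x := le_sqrt_of_sq_le (by linarith)
  have hn : 1 ≤ ⌊√x⌋₊ := Nat.le_floor (by push_cast; linarith)
  refine ⟨⟨⌊√x⌋₊, hn⟩, ?_, ?_⟩
  · have h1 : √x / 2 ≤ ⌊√x⌋₊ := by linarith [Nat.lt_floor_add_one √x]
    have h2 : x / 4 = (√x / 2) ^ 2 := by rw [div_pow, sq_sqrt (by linarith)]; norm_num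
    rw [PNat.mk_coe, h2]
    gcongr
  · calc ((⌊√x⌋₊ : ℕ) : ℝ) ^ 2 ≤ √x ^ 2 := by gcongr; exact Nat.floor_le (sqrt_nonneg x)
      _ = x := sq_sqrt (by linarith)

section Quadratic

variable {β a μ C : ℝ}

lemma summable_exp_neg_mul_sq (hβ : 0 < β) (ha : 0 < a) :
    Summable fun k : ℕ+ => exp (-(β * (a * (k : ℕ) ^ 2))) := by
  refine (summable_exp_neg_mul_pnat (mul_pos hβ ha)).of_nonneg_of_le (fun _ => (exp_pos _).le)
    fun k => exp_le_exp.2 ?_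
  have hk : ((k : ℕ) : ℝ) ≤ ((k : ℕ) : ℝ) ^ 2 := by
    nlinarith [show (1 : ℝ) ≤ (k : ℕ) from mod_cast k.pos]
  nlinarith [mul_pos hβ ha]

lemma nat_mul_le_lnXi_sq (hβ : 0 < β) (ha : 0 < a) (n : ℕ+)
    (hn : 2 * a * ((n : ℕ) : ℝ) ^ 2 ≤ μ) :
    (n : ℕ) * (β * μ / 2) ≤ lnXi β μ fun k => a * (k : ℕ) ^ 2 := by
  have hterm : ∀ k ∈ Finset.Icc 1 n,
      β * μ / 2 ≤ log (1 + exp (β * (μ - a * (k : ℕ) ^ 2))) := by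
    intro k hk
    have hkn : ((k : ℕ) : ℝ) ≤ (n : ℕ) := mod_cast (Finset.mem_Icc.1 hk).2
    have : a * ((k : ℕ) : ℝ) ^ 2 ≤ a * ((n : ℕ) : ℝ) ^ 2 := by gcongr
    exact le_trans (by nlinarith) (le_log_one_add_exp _)
  calc ((n : ℕ) : ℝ) * (β * μ / 2) = (Finset.Icc 1 n).card • (β * μ / 2) := by simp
    _ ≤ ∑ k ∈ Finset.Icc 1 n, log (1 + exp (β * (μ - a * (k : ℕ) ^ 2))) :=
      Finset.card_nsmul_le_sum _ _ _ hterm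
    _ ≤ _ := (summable_log_one_add_exp_of_summable_exp μ
      (summable_exp_neg_mul_sq hβ ha)).sum_le_tsum _ fun _ _ => (log_one_add_exp_pos _).le

lemma lnXi_sq_add_sub_le (hβ : 0 < β) (ha : 0 < a) (hC : 0 ≤ C) (K : ℕ+)
    (hK : μ + C ≤ a * ((K : ℕ) : ℝ) ^ 2) :
    (lnXi β (μ + C) fun k => a * (k : ℕ) ^ 2) - (lnXi β μ fun k => a * (k : ℕ) ^ 2)
      ≤ (K : ℕ) * (β * C) + ∑' k : ℕ+, exp (-(β * a * (k : ℕ))) := by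
  set f : ℝ → ℕ+ → ℝ := fun ν k => log (1 + exp (β * (ν - a * (k : ℕ) ^ 2))) with hf
  have hsum (ν : ℝ) : Summable (f ν) :=
    summable_log_one_add_exp_of_summable_exp ν (summable_exp_neg_mul_sq hβ ha)
  have hgeom := summable_exp_neg_mul_pnat (mul_pos hβ ha)
  have hind : Summable (Set.indicator (Finset.Icc 1 K : Set ℕ+) fun _ => β * C) :=
    summable_of_ne_finset_zero fun k hk => Set.indicator_of_notMem (by exact_mod_cast hk) _
  have hterm : ∀ k, f (μ + C) k - f μ k
      ≤ Set.indicator (Finset.Icc 1 K : Set ℕ+) (fun _ => β * C) k + exp (-(β * a * (k : ℕ))) := by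
    intro k
    by_cases hk : k ∈ Finset.Icc 1 K
    · have : β * (μ + C - a * (k : ℕ) ^ 2) = β * (μ - a * (k : ℕ) ^ 2) + β * C := by ring
      rw [Set.indicator_of_mem (by exact_mod_cast hk)]
      simp only [hf, this]
      linarith [log_one_add_exp_add_le (β * (μ - a * (k : ℕ) ^ 2)) (mul_nonneg hβ.le hC),
        exp_pos (-(β * a * (k : ℕ)))]
    · have hKk : ((K : ℕ) : ℝ) + 1 ≤ (k : ℕ) := by
        have : K < k := by simpa [Finset.mem_Icc] using hk
        exact_mod_cast this
      have hexp : β * (μ + C - a * (k : ℕ) ^ 2) ≤ -(β * a * (k : ℕ)) := by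
        have hsq : ((k : ℕ) : ℝ) ≤ ((k : ℕ) : ℝ) ^ 2 - ((K : ℕ) : ℝ) ^ 2 := by nlinarith
        nlinarith [mul_le_mul_of_nonneg_left hsq ha.le]
      rw [Set.indicator_of_notMem (by exact_mod_cast hk), zero_add]
      linarith [log_one_add_exp_le_exp (β * (μ + C - a * (k : ℕ) ^ 2)), exp_le_exp.2 hexp,
        log_one_add_exp_pos (β * (μ - a * (k : ℕ) ^ 2))]
  calc (lnXi β (μ + C) fun k => a * (k : ℕ) ^ 2) - (lnXi β μ fun k => a * (k : ℕ) ^ 2)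
      = ∑' k, (f (μ + C) k - f μ k) := ((hsum _).tsum_sub (hsum _)).symm
    _ ≤ ∑' k, (Set.indicator (Finset.Icc 1 K : Set ℕ+) (fun _ => β * C) k
          + exp (-(β * a * (k : ℕ)))) :=
      ((hsum _).sub (hsum _)).tsum_le_tsum hterm (hind.add hgeom)
    _ = (K : ℕ) * (β * C) + ∑' k : ℕ+, exp (-(β * a * (k : ℕ))) := by
      rw [hind.tsum_add hgeom, ← sum_eq_tsum_indicator]
      simp

lemma exists_eventually_lnXi_sq_add_le (hβ : 0 < β) (ha : 0 < a) (hC : 0 ≤ C) :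
    ∃ c : ℝ, ∀ᶠ μ in atTop,
      (lnXi β (μ + C) fun k => a * (k : ℕ) ^ 2)
        ≤ (1 + c / μ) * lnXi β μ fun k => a * (k : ℕ) ^ 2 := by
  obtain ⟨D, hD_eq⟩ : ∃ D, ∑' k : ℕ+, exp (-(β * a * (k : ℕ))) = D := ⟨_, rfl⟩
  have hD : 0 ≤ D := hD_eq ▸ tsum_nonneg fun _ => (exp_pos _).le
  refine ⟨2 * (3 * β * C + D) / β, ?_⟩
  filter_upwards [eventually_ge_atTop (8 * a), eventually_ge_atTop (8 * C)] with μ hμa hμC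
  have hμ : 0 < μ := by linarith
  obtain ⟨n, hn_ge, hn_le⟩ := exists_pnat_sq_mem_Icc (x := μ / (2 * a))
    (by rw [le_div_iff₀ (by positivity)]; linarith)
  rw [div_div, div_le_iff₀ (by positivity)] at hn_ge
  rw [le_div_iff₀ (by positivity)] at hn_le
  have hn1 : (1 : ℝ) ≤ (n : ℕ) := mod_cast n.pos
  have hlow := nat_mul_le_lnXi_sq (μ := μ) hβ ha n (by linarith)
  have hinc := lnXi_sq_add_sub_le (μ := μ) hβ ha hC (3 * n) (by push_cast; nlinarith)
  rw [hD_eq] at hinc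
  push_cast at hinc
  have hD_le : D ≤ (n : ℕ) * D := le_mul_of_one_le_left hD hn1
  calc (lnXi β (μ + C) fun k => a * (k : ℕ) ^ 2)
      ≤ (lnXi β μ fun k => a * (k : ℕ) ^ 2) + (n : ℕ) * (3 * β * C + D) := by linarith
    _ = (lnXi β μ fun k => a * (k : ℕ) ^ 2)
          + 2 * (3 * β * C + D) / β / μ * ((n : ℕ) * (β * μ / 2)) := by field_simp
    _ ≤ (lnXi β μ fun k => a * (k : ℕ) ^ 2)
          + 2 * (3 * β * C + D) / β / μ * lnXi β μ fun k => a * (k : ℕ) ^ 2 := by gcongr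
    _ = (1 + 2 * (3 * β * C + D) / β / μ) * lnXi β μ fun k => a * (k : ℕ) ^ 2 := by ring

lemma tendsto_lnXi_sq_add_div (hβ : 0 < β) (ha : 0 < a) (hC : 0 ≤ C) :
    Tendsto (fun μ =>
        (lnXi β (μ + C) fun k => a * (k : ℕ) ^ 2) / lnXi β μ fun k => a * (k : ℕ) ^ 2)
      atTop (nhds 1) := by
  have hsum := summable_exp_neg_mul_sq hβ ha
  obtain ⟨c, hc⟩ := exists_eventually_lnXi_sq_add_le hβ ha hC
  have hupper : Tendsto (fun μ : ℝ => 1 + c / μ) atTop (nhds 1) := by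
    simpa using (tendsto_const_nhds (x := (1 : ℝ))).add
      ((tendsto_const_nhds (x := c)).div_atTop tendsto_id)
  refine tendsto_of_tendsto_of_tendsto_of_le_of_le' tendsto_const_nhds hupper
    (Eventually.of_forall fun μ => ?_) (hc.mono fun μ hμ => ?_)
  · exact (one_le_div (lnXi_pos μ hsum)).2 (lnXi_le_lnXi hβ.le (fun k => by linarith) hsum hsum)
  · exact (div_le_iff₀ (lnXi_pos μ hsum)).2 hμ

lemma tendsto_lnXi_sq_sub_div (hβ : 0 < β) (ha : 0 < a) (hC : 0 ≤ C) :
    Tendsto (fun μ =>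
        (lnXi β (μ - C) fun k => a * (k : ℕ) ^ 2) / lnXi β μ fun k => a * (k : ℕ) ^ 2)
      atTop (nhds 1) := by
  have h := ((tendsto_lnXi_sq_add_div hβ ha hC).comp (tendsto_atTop_add_const_right _ (-C)
    tendsto_id)).inv₀ one_ne_zero
  rw [inv_one] at h
  refine h.congr fun μ => ?_
  simp [← sub_eq_add_neg]

end Quadratic

theorem stmt_1_general (β Λ : ℝ) (hβ : 0 < β) (hΛ : 0 < Λ) (C : ℝ)
    (ε : ℕ+ → ℝ) (hε : ∀ k : ℕ+, |ε k - π ^ 2 * (k : ℕ) ^ 2 / Λ ^ 2| ≤ C) :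
    Tendsto (fun μ =>
        lnXi β μ ε / lnXi β μ (fun k => π ^ 2 * (k : ℕ) ^ 2 / Λ ^ 2))
      atTop (nhds 1) := by
  have hfree (k : ℕ+) : π ^ 2 * (k : ℕ) ^ 2 / Λ ^ 2 = (π / Λ) ^ 2 * (k : ℕ) ^ 2 := by ring
  simp only [hfree] at hε ⊢
  have ha : 0 < (π / Λ) ^ 2 := by positivity
  have hC : 0 ≤ C := (abs_nonneg _).trans (hε 1)
  have hsum := summable_exp_neg_mul_sq hβ ha
  have hpos μ := lnXi_pos μ hsum
  refine tendsto_of_tendsto_of_tendsto_of_le_of_le (tendsto_lnXi_sq_sub_div hβ ha hC)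
    (tendsto_lnXi_sq_add_div hβ ha hC) (fun μ => ?_) (fun μ => ?_)
  · exact div_le_div_of_nonneg_right (lnXi_mem_Icc_of_abs_sub_le hβ.le hε hsum μ).1 (hpos μ).le
  · exact div_le_div_of_nonneg_right (lnXi_mem_Icc_of_abs_sub_le hβ.le hε hsum μ).2 (hpos μ).le

/-- Theorem 2 of the paper: for fixed `Λ` and eigenvalues within `C` of the free
Dirichlet eigenvalues `π²k²/Λ²`, `ln Ξ_μ^{(V)} / ln Ξ_μ^{(0)} → 1` as `μ → ∞`. -/
theorem stmt_1 (β Λ : ℝ) (hβ : 0 < β) (hΛ : 0 < Λ) (C : ℝ) (hC : 0 < C)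
    (ε : ℕ+ → ℝ) (hε : ∀ k : ℕ+, |ε k - π ^ 2 * (k : ℕ) ^ 2 / Λ ^ 2| ≤ C) :
    Tendsto (fun μ =>
        lnXi β μ ε / lnXi β μ (fun k => π ^ 2 * (k : ℕ) ^ 2 / Λ ^ 2))
      atTop (nhds 1) :=
  stmt_1_general β Λ hβ hΛ C ε hε
end

section
/- Let β > 0 and C > 0 be fixed. For each Λ > 0 let ε(Λ) : {1,2,...} → ℝ satisfy |ε_k(Λ) − π²k²/Λ²| ≤ C for all k ≥ 1, and suppose that for every μ ∈ ℝ the thermodynamic limit Ω_μ^{(V)} = lim_{Λ→∞} (1/Λ) Σ_{k=1}^∞ ln(1 + e^{β(μ−ε_k(Λ))}) exists. Let Ω_μ^{(0)} = (1/π) ∫_0^∞ ln(1 + e^{β(μ−p²)}) dp. Then Ω_μ^{(V)}/Ω_μ^{(0)} → 1 as μ → ∞. -/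
/-!
Each summand `log (1 + exp (β (μ - ε_k)))` lies between the free summands at chemical potentials
`μ - C` and `μ + C`, and for the free integrand, which decreases in `p ≥ 0`, the Riemann sum with
step `π / Λ` differs from the integral by at most one term. Hence `Ω_μ^{(V)}`, like `Ω_μ^{(0)}`,
lies between `Ω_{μ-C}^{(0)}` and `Ω_{μ+C}^{(0)}`. This gap is `O(√μ)`: up to `p = 2√μ` the two
integrands differ by at most `2βC`, and beyond that the `μ + C` integrand has an exponentially
small tail. On the other hand `log (1 + eˣ) ≥ x` gives `Ω_μ^{(0)} ≥ 2β μ^{3/2} / (3π)`.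
-/

open Real Filter MeasureTheory

open Set Topology

noncomputable def softplus (x : ℝ) : ℝ := log (1 + exp x)

lemma softplus_nonneg (x : ℝ) : 0 ≤ softplus x :=
  log_nonneg (by linarith [exp_pos x])

lemma softplus_le_exp (x : ℝ) : softplus x ≤ exp x := by
  unfold softplus
  linarith [log_le_sub_one_of_pos (x := 1 + exp x) (by positivity)]

lemma le_softplus (x : ℝ) : x ≤ softplus x :=
  calc x = log (exp x) := (log_exp x).symm
  _ ≤ softplus x := log_le_log (exp_pos x) (by linarith)

lemma softplus_monotone : Monotone softplus := fun _ _ h ↦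
  log_le_log (by positivity) (by linarith [exp_le_exp.2 h])

lemma softplus_add_le (x : ℝ) {c : ℝ} (hc : 0 ≤ c) : softplus (x + c) ≤ softplus x + c := by
  have h : 1 + exp (x + c) ≤ exp c * (1 + exp x) := by
    rw [exp_add]
    nlinarith [one_le_exp hc, exp_pos x]
  calc softplus (x + c) ≤ log (exp c * (1 + exp x)) := log_le_log (by positivity) h
  _ = softplus x + c := by
    rw [log_mul (by positivity) (by positivity), log_exp, softplus, add_comm]

lemma continuous_softplus : Continuous softplus :=
  (continuous_const.add continuous_exp).log fun _ ↦ (add_pos one_pos (exp_pos _)).ne'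

section RiemannSum

variable {f : ℝ → ℝ} {h : ℝ}

lemma AntitoneOn.comp_mul_left (hf : AntitoneOn f (Ici 0)) (hh : 0 < h) :
    AntitoneOn (fun t ↦ f (h * t)) (Ici 0) := fun _ hs _ ht hst ↦
  hf (mul_nonneg hh.le hs) (mul_nonneg hh.le ht) (mul_le_mul_of_nonneg_left hst hh.le)

lemma MeasureTheory.IntegrableOn.comp_mul_left_Ioi (hfi : IntegrableOn f (Ioi 0)) (hh : 0 < h) :
    IntegrableOn (fun t ↦ f (h * t)) (Ioi 0) :=
  (integrableOn_Ioi_comp_mul_left_iff f 0 hh).2 (by rwa [mul_zero])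

lemma AntitoneOn.summable_pnat_comp_mul (hf : AntitoneOn f (Ici 0))
    (hfi : IntegrableOn f (Ioi 0)) (hf0 : ∀ t ∈ Ioi 0, 0 ≤ f t) (hh : 0 < h) :
    Summable (fun k : ℕ+ ↦ f (h * k)) := by
  have := (hf.comp_mul_left hh).summable_of_integrableOn_Ioi_zero (hfi.comp_mul_left_Ioi hh)
    fun t ht ↦ hf0 _ (mul_pos hh ht)
  exact summable_pnat_iff_summable_succ (f := fun n : ℕ ↦ f (h * n)) |>.2
    ((summable_nat_add_iff 1).2 this)

lemma AntitoneOn.mul_tsum_pnat_comp_mul_le_integral (hf : AntitoneOn f (Ici 0))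
    (hfi : IntegrableOn f (Ioi 0)) (hf0 : ∀ t ∈ Ioi 0, 0 ≤ f t) (hh : 0 < h) :
    h * ∑' k : ℕ+, f (h * k) ≤ ∫ t in Ioi 0, f t := by
  have := (hf.comp_mul_left hh).tsum_add_one_le_integral (hfi.comp_mul_left_Ioi hh)
    fun t ht ↦ hf0 _ (mul_pos hh ht)
  rw [integral_comp_mul_left_Ioi f 0 hh, mul_zero, smul_eq_mul] at this
  rwa [tsum_pnat_eq_tsum_succ (f := fun n : ℕ ↦ f (h * n)), ← le_inv_mul_iff₀ hh]

lemma AntitoneOn.integral_le_mul_add_mul_tsum_pnat_comp_mul (hf : AntitoneOn f (Ici 0))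
    (hfi : IntegrableOn f (Ioi 0)) (hf0 : ∀ t ∈ Ioi 0, 0 ≤ f t) (hh : 0 < h) :
    ∫ t in Ioi 0, f t ≤ h * f 0 + h * ∑' k : ℕ+, f (h * k) := by
  have hgi := hfi.comp_mul_left_Ioi hh
  have hg0 : ∀ t ∈ Ioi 0, 0 ≤ f (h * t) := fun t ht ↦ hf0 _ (mul_pos hh ht)
  have hsum := (hf.comp_mul_left hh).summable_of_integrableOn_Ioi_zero hgi hg0
  have := (hf.comp_mul_left hh).integral_le_tsum hsum hg0
  rw [integral_comp_mul_left_Ioi f 0 hh, mul_zero, smul_eq_mul, hsum.tsum_eq_zero_add,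
    ← tsum_pnat_eq_tsum_succ (f := fun n : ℕ ↦ f (h * n))] at this
  simp only [Nat.cast_zero, mul_zero] at this
  rw [← mul_add]
  rwa [inv_mul_le_iff₀ hh] at this

end RiemannSum

/-- `π Ω_ν^{(0)}`. -/
noncomputable def fermiIntegral (β ν : ℝ) : ℝ := ∫ p in Ioi 0, softplus (β * (ν - p ^ 2))

section FermiIntegral

variable {β : ℝ}

lemma antitoneOn_softplus_sub_sq (hβ : 0 ≤ β) (ν : ℝ) :
    AntitoneOn (fun p ↦ softplus (β * (ν - p ^ 2))) (Ici 0) := fun p hp _ _ hpq ↦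
  softplus_monotone <| mul_le_mul_of_nonneg_left (by nlinarith [mem_Ici.1 hp]) hβ

lemma integrable_softplus_sub_sq (hβ : 0 < β) (ν : ℝ) :
    Integrable (fun p ↦ softplus (β * (ν - p ^ 2))) := by
  refine ((integrable_exp_neg_mul_sq hβ).const_mul (exp (β * ν))).mono'
    (continuous_softplus.comp (by fun_prop)).aestronglyMeasurable (.of_forall fun p ↦ ?_)
  rw [norm_of_nonneg (softplus_nonneg _), ← exp_add]
  exact (softplus_le_exp _).trans_eq (by ring_nf)

lemma fermiIntegral_mono (hβ : 0 < β) : Monotone (fermiIntegral β) := fun _ _ h ↦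
  setIntegral_mono (integrable_softplus_sub_sq hβ _).integrableOn
    (integrable_softplus_sub_sq hβ _).integrableOn fun _ ↦
      softplus_monotone (by nlinarith)

lemma mul_sqrt_le_fermiIntegral (hβ : 0 < β) {ν : ℝ} (hν : 0 ≤ ν) :
    2 / 3 * β * (ν * √ν) ≤ fermiIntegral β ν := by
  set s := √ν
  have hs : 0 ≤ s := sqrt_nonneg ν
  have hs2 : s ^ 2 = ν := sq_sqrt hν
  have hpoly : ∫ p in (0)..s, β * (ν - p ^ 2) = 2 / 3 * β * (ν * s) := by
    rw [intervalIntegral.integral_const_mul, intervalIntegral.integral_sub intervalIntegrable_const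
      (intervalIntegral.intervalIntegrable_pow 2), intervalIntegral.integral_const, integral_pow,
      smul_eq_mul, ← hs2]
    ring
  calc 2 / 3 * β * (ν * s) = ∫ p in (0)..s, β * (ν - p ^ 2) := hpoly.symm
  _ ≤ ∫ p in (0)..s, softplus (β * (ν - p ^ 2)) :=
    intervalIntegral.integral_mono_on hs (Continuous.intervalIntegrable (by fun_prop) _ _)
      ((continuous_softplus.comp (by fun_prop)).intervalIntegrable _ _) fun p _ ↦ le_softplus _
  _ = ∫ p in Ioc 0 s, softplus (β * (ν - p ^ 2)) := intervalIntegral.integral_of_le hs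
  _ ≤ fermiIntegral β ν :=
    setIntegral_mono_set (integrable_softplus_sub_sq hβ ν).integrableOn
      (.of_forall fun _ ↦ softplus_nonneg _) Ioc_subset_Ioi_self.eventuallyLE

lemma fermiIntegral_pos (hβ : 0 < β) {ν : ℝ} (hν : 0 < ν) : 0 < fermiIntegral β ν :=
  (by positivity : 0 < 2 / 3 * β * (ν * √ν)).trans_le (mul_sqrt_le_fermiIntegral hβ hν.le)

lemma setIntegral_Ioi_softplus_sub_sq_le (hβ : 0 < β) {ν a : ℝ} (ha : 0 < a) (hνa : ν ≤ a ^ 2) :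
    ∫ p in Ioi a, softplus (β * (ν - p ^ 2)) ≤ 1 / (β * a) := by
  have hβa : 0 < β * a := mul_pos hβ ha
  calc ∫ p in Ioi a, softplus (β * (ν - p ^ 2))
      ≤ ∫ p in Ioi a, exp (β * a ^ 2) * exp (-(β * a) * p) := by
        refine setIntegral_mono_on (integrable_softplus_sub_sq hβ ν).integrableOn
          ((exp_neg_integrableOn_Ioi a hβa).const_mul _) measurableSet_Ioi fun p hp ↦ ?_
        have htail : ν - p ^ 2 ≤ a * a - a * p := by nlinarith [mem_Ioi.1 hp]
        rw [← exp_add]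
        refine (softplus_le_exp _).trans (exp_le_exp.2 ?_)
        nlinarith [mul_le_mul_of_nonneg_left htail hβ.le]
  _ = 1 / (β * a) := by
        rw [integral_const_mul, integral_exp_mul_Ioi (by linarith), neg_div_neg_eq,
          ← mul_div_assoc, ← exp_add, show β * a ^ 2 + -(β * a) * a = 0 by ring, exp_zero]

lemma fermiIntegral_sub_le (hβ : 0 < β) {ν ν' a : ℝ} (hν : ν ≤ ν') (ha : 0 < a)
    (hν'a : ν' ≤ a ^ 2) :
    fermiIntegral β ν' - fermiIntegral β ν ≤ β * (ν' - ν) * a + 1 / (β * a) := by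
  set D := fun p ↦ softplus (β * (ν' - p ^ 2)) - softplus (β * (ν - p ^ 2))
  have hint := integrable_softplus_sub_sq hβ
  have hD : Integrable D := (hint ν').sub (hint ν)
  have hbulk : ∫ p in Ioc 0 a, D p ≤ β * (ν' - ν) * a := by
    calc ∫ p in Ioc 0 a, D p ≤ ∫ _ in Ioc 0 a, β * (ν' - ν) := by
          refine setIntegral_mono_on hD.integrableOn (integrableOn_const measure_Ioc_lt_top.ne)
            measurableSet_Ioc fun p _ ↦ ?_
          have := softplus_add_le (β * (ν - p ^ 2)) (mul_nonneg hβ.le (sub_nonneg.2 hν))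
          rw [show β * (ν - p ^ 2) + β * (ν' - ν) = β * (ν' - p ^ 2) by ring] at this
          linarith
    _ = β * (ν' - ν) * a := by
          rw [setIntegral_const, volume_real_Ioc_of_le ha.le, smul_eq_mul]
          ring
  have htail : ∫ p in Ioi a, D p ≤ 1 / (β * a) :=
    (setIntegral_mono_on hD.integrableOn (hint ν').integrableOn measurableSet_Ioi
      fun _ _ ↦ sub_le_self _ (softplus_nonneg _)).trans
      (setIntegral_Ioi_softplus_sub_sq_le hβ ha hν'a)
  calc fermiIntegral β ν' - fermiIntegral β ν = ∫ p in Ioi 0, D p :=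
        (integral_sub (hint ν').integrableOn (hint ν).integrableOn).symm
  _ = (∫ p in Ioc 0 a, D p) + ∫ p in Ioi a, D p := by
        rw [← Ioc_union_Ioi_eq_Ioi ha.le, setIntegral_union (Ioc_disjoint_Ioi le_rfl)
          measurableSet_Ioi hD.integrableOn hD.integrableOn]
  _ ≤ β * (ν' - ν) * a + 1 / (β * a) := add_le_add hbulk htail

lemma tendsto_fermiIntegral_sub_div {C : ℝ} (hβ : 0 < β) (hC : 0 ≤ C) :
    Tendsto (fun μ ↦ (fermiIntegral β (μ + C) - fermiIntegral β (μ - C)) / fermiIntegral β μ)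
      atTop (𝓝 0) := by
  set K := 4 * β * C + 1 / (2 * β)
  refine squeeze_zero' ?_ ?_ (tendsto_const_nhds (x := 3 * K / (2 * β)).div_atTop tendsto_id)
  · filter_upwards [eventually_gt_atTop 0] with μ hμ
    exact div_nonneg (sub_nonneg.2 (fermiIntegral_mono hβ (by linarith)))
      (fermiIntegral_pos hβ hμ).le
  filter_upwards [eventually_ge_atTop (max 1 C)] with μ hμ
  have hμ1 : 1 ≤ μ := le_of_max_le_left hμ
  have hμC : C ≤ μ := le_of_max_le_right hμ
  have hs : 1 ≤ √μ := one_le_sqrt.2 hμ1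
  have hs2 : √μ ^ 2 = μ := sq_sqrt (by linarith)
  have hgap : fermiIntegral β (μ + C) - fermiIntegral β (μ - C) ≤ K * √μ := by
    refine (fermiIntegral_sub_le (a := 2 * √μ) hβ (by linarith) (by positivity)
      (by nlinarith)).trans ?_
    have : 1 / (β * (2 * √μ)) ≤ 1 / (2 * β) * √μ := by
      rw [div_le_iff₀ (by positivity)]
      field_simp
      nlinarith
    nlinarith
  calc (fermiIntegral β (μ + C) - fermiIntegral β (μ - C)) / fermiIntegral β μ
      ≤ K * √μ / (2 / 3 * β * (μ * √μ)) :=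
        div_le_div₀ (by positivity) hgap (by positivity)
          (mul_sqrt_le_fermiIntegral hβ (by linarith))
  _ = 3 * K / (2 * β) / μ := by
        field_simp

end FermiIntegral

section FiniteVolume

variable {β μ C Λ : ℝ} {e : ℕ+ → ℝ}

lemma softplus_mem_Icc_of_abs_sub_le (hβ : 0 ≤ β) {x y : ℝ} (h : |x - y| ≤ C) :
    softplus (β * (μ - x)) ∈ Icc (softplus (β * (μ - C - y))) (softplus (β * (μ + C - y))) := by
  obtain ⟨h₁, h₂⟩ := abs_le.1 h
  exact ⟨softplus_monotone (mul_le_mul_of_nonneg_left (by linarith) hβ),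
    softplus_monotone (mul_le_mul_of_nonneg_left (by linarith) hβ)⟩

lemma softplus_dirichlet_mem_Icc (hβ : 0 ≤ β)
    (he : ∀ k : ℕ+, |e k - π ^ 2 * (k : ℕ) ^ 2 / Λ ^ 2| ≤ C) (k : ℕ+) :
    softplus (β * (μ - e k)) ∈
      Icc (softplus (β * (μ - C - (π / Λ * k) ^ 2)))
        (softplus (β * (μ + C - (π / Λ * k) ^ 2))) := by
  rw [show (π / Λ * k) ^ 2 = π ^ 2 * (k : ℕ) ^ 2 / Λ ^ 2 by ring]
  exact softplus_mem_Icc_of_abs_sub_le hβ (he k)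

lemma summable_softplus_dirichlet (hβ : 0 < β) (hΛ : 0 < Λ) (ν : ℝ) :
    Summable fun k : ℕ+ ↦ softplus (β * (ν - (π / Λ * k) ^ 2)) :=
  (antitoneOn_softplus_sub_sq hβ.le ν).summable_pnat_comp_mul
    (integrable_softplus_sub_sq hβ ν).integrableOn (fun _ _ ↦ softplus_nonneg _) (by positivity)

lemma summable_softplus_of_dirichlet (hβ : 0 < β) (hΛ : 0 < Λ)
    (he : ∀ k : ℕ+, |e k - π ^ 2 * (k : ℕ) ^ 2 / Λ ^ 2| ≤ C) :
    Summable fun k : ℕ+ ↦ softplus (β * (μ - e k)) :=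
  (summable_softplus_dirichlet hβ hΛ (μ + C)).of_nonneg_of_le (fun _ ↦ softplus_nonneg _)
    fun k ↦ (softplus_dirichlet_mem_Icc hβ.le he k).2

lemma one_div_mul_lnXi_le (hβ : 0 < β) (hΛ : 0 < Λ)
    (he : ∀ k : ℕ+, |e k - π ^ 2 * (k : ℕ) ^ 2 / Λ ^ 2| ≤ C) :
    1 / Λ * lnXi β μ e ≤ 1 / π * fermiIntegral β (μ + C) := by
  have hsum : lnXi β μ e ≤ ∑' k : ℕ+, softplus (β * (μ + C - (π / Λ * k) ^ 2)) :=
    (summable_softplus_of_dirichlet hβ hΛ he).tsum_le_tsum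
      (fun k ↦ (softplus_dirichlet_mem_Icc hβ.le he k).2) (summable_softplus_dirichlet hβ hΛ _)
  have hriemann := (antitoneOn_softplus_sub_sq hβ.le (μ + C)).mul_tsum_pnat_comp_mul_le_integral
    (integrable_softplus_sub_sq hβ _).integrableOn (fun _ _ ↦ softplus_nonneg _)
    (div_pos pi_pos hΛ)
  calc 1 / Λ * lnXi β μ e ≤ 1 / Λ * ∑' k : ℕ+, softplus (β * (μ + C - (π / Λ * k) ^ 2)) := by
        gcongr
  _ = 1 / π * (π / Λ * ∑' k : ℕ+, softplus (β * (μ + C - (π / Λ * k) ^ 2))) := by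
        field_simp
  _ ≤ 1 / π * fermiIntegral β (μ + C) := by gcongr; exact hriemann

lemma sub_le_one_div_mul_lnXi (hβ : 0 < β) (hΛ : 0 < Λ)
    (he : ∀ k : ℕ+, |e k - π ^ 2 * (k : ℕ) ^ 2 / Λ ^ 2| ≤ C) :
    1 / π * fermiIntegral β (μ - C) - softplus (β * (μ - C)) / Λ ≤ 1 / Λ * lnXi β μ e := by
  have hsum : ∑' k : ℕ+, softplus (β * (μ - C - (π / Λ * k) ^ 2)) ≤ lnXi β μ e :=
    (summable_softplus_dirichlet hβ hΛ _).tsum_le_tsum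
      (fun k ↦ (softplus_dirichlet_mem_Icc hβ.le he k).1) (summable_softplus_of_dirichlet hβ hΛ he)
  have hriemann :=
    (antitoneOn_softplus_sub_sq hβ.le (μ - C)).integral_le_mul_add_mul_tsum_pnat_comp_mul
      (integrable_softplus_sub_sq hβ _).integrableOn (fun _ _ ↦ softplus_nonneg _)
      (div_pos pi_pos hΛ)
  simp only [zero_pow two_ne_zero, sub_zero] at hriemann
  calc 1 / π * fermiIntegral β (μ - C) - softplus (β * (μ - C)) / Λ
      ≤ 1 / π * (π / Λ * softplus (β * (μ - C))
          + π / Λ * ∑' k : ℕ+, softplus (β * (μ - C - (π / Λ * k) ^ 2)))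
        - softplus (β * (μ - C)) / Λ := by gcongr; exact hriemann
  _ = 1 / Λ * ∑' k : ℕ+, softplus (β * (μ - C - (π / Λ * k) ^ 2)) := by
        field_simp
        ring
  _ ≤ 1 / Λ * lnXi β μ e := by gcongr

end FiniteVolume

lemma mem_Icc_of_tendsto_lnXi {β μ C ω : ℝ} {ε : ℝ → ℕ+ → ℝ} (hβ : 0 < β)
    (hε : ∀ Λ : ℝ, 0 < Λ → ∀ k : ℕ+, |ε Λ k - π ^ 2 * (k : ℕ) ^ 2 / Λ ^ 2| ≤ C)
    (hω : Tendsto (fun Λ : ℝ ↦ 1 / Λ * lnXi β μ (ε Λ)) atTop (𝓝 ω)) :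
    ω ∈ Icc (1 / π * fermiIntegral β (μ - C)) (1 / π * fermiIntegral β (μ + C)) := by
  have hlower : Tendsto (fun Λ ↦ 1 / π * fermiIntegral β (μ - C) - softplus (β * (μ - C)) / Λ)
      atTop (𝓝 (1 / π * fermiIntegral β (μ - C))) := by
    simpa using tendsto_const_nhds.sub
      ((tendsto_const_nhds (x := softplus (β * (μ - C)))).div_atTop tendsto_id)
  refine ⟨le_of_tendsto_of_tendsto hlower hω ?_, le_of_tendsto hω ?_⟩ <;>
    filter_upwards [eventually_gt_atTop 0] with Λ hΛ
  · exact sub_le_one_div_mul_lnXi hβ hΛ (hε Λ hΛ)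
  · exact one_div_mul_lnXi_le hβ hΛ (hε Λ hΛ)

lemma abs_div_sub_one_le_of_mem_Icc {a b x y : ℝ} (hx : x ∈ Icc a b) (hy : y ∈ Icc a b)
    (hy₀ : 0 < y) : |x / y - 1| ≤ (b - a) / y := by
  rw [div_sub_one hy₀.ne', abs_div, abs_of_pos hy₀]
  gcongr
  exact abs_sub_le_iff.2 ⟨by linarith [hx.2, hy.1], by linarith [hx.1, hy.2]⟩

/-- Theorem 3 of the paper: if the eigenvalues `ε_k(Λ)` are within `C` of the free
Dirichlet eigenvalues and the thermodynamic limit `Ω_μ^{(V)}` of `(1/Λ) ln Ξ_μ^{(V)}(Λ)`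
exists for every `μ`, then `Ω_μ^{(V)} / Ω_μ^{(0)} → 1` as `μ → ∞`, where
`Ω_μ^{(0)} = (1/π) ∫_0^∞ ln(1 + e^{β(μ−p²)}) dp`. -/
theorem stmt_2 (β : ℝ) (hβ : 0 < β) (C : ℝ) (hC : 0 < C)
    (ε : ℝ → ℕ+ → ℝ)
    (hε : ∀ Λ : ℝ, 0 < Λ → ∀ k : ℕ+, |ε Λ k - π ^ 2 * (k : ℕ) ^ 2 / Λ ^ 2| ≤ C)
    (Ω : ℝ → ℝ)
    (hΩ : ∀ μ : ℝ, Tendsto (fun Λ : ℝ => (1 / Λ) * lnXi β μ (ε Λ)) atTop (nhds (Ω μ))) :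
    Tendsto (fun μ =>
        Ω μ / ((1 / π) * ∫ p in Set.Ioi (0 : ℝ), Real.log (1 + Real.exp (β * (μ - p ^ 2)))))
      atTop (nhds 1) := by
  change Tendsto (fun μ ↦ Ω μ / (1 / π * fermiIntegral β μ)) atTop (𝓝 1)
  rw [← tendsto_sub_nhds_zero_iff]
  refine squeeze_zero_norm' ?_ (tendsto_fermiIntegral_sub_div hβ hC.le)
  filter_upwards [eventually_gt_atTop 0] with μ hμ
  have hJ := fermiIntegral_pos hβ hμ
  have hJ_mem : 1 / π * fermiIntegral β μ ∈
      Icc (1 / π * fermiIntegral β (μ - C)) (1 / π * fermiIntegral β (μ + C)) :=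
    ⟨by gcongr; exact fermiIntegral_mono hβ (by linarith),
      by gcongr; exact fermiIntegral_mono hβ (by linarith)⟩
  calc ‖Ω μ / (1 / π * fermiIntegral β μ) - 1‖
      ≤ (1 / π * fermiIntegral β (μ + C) - 1 / π * fermiIntegral β (μ - C))
        / (1 / π * fermiIntegral β μ) :=
        abs_div_sub_one_le_of_mem_Icc (mem_Icc_of_tendsto_lnXi hβ hε (hΩ μ)) hJ_mem
          (by positivity)
  _ = (fermiIntegral β (μ + C) - fermiIntegral β (μ - C)) / fermiIntegral β μ := by
        rw [← mul_sub, mul_div_mul_left _ _ (by positivity)]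
end

section
/- Let β > 0, let Λ > 0, and let N be a positive integer with N > Λ. Define Z_N^{(0)}(Λ) = Σ_{0<k_1<...<k_N} exp(−β Σ_{i=1}^N π²k_i²/Λ²), the sum over strictly increasing N-tuples of positive integers. Then Z_N^{(0)}(Λ) ≤ (1/N!) (Λ/β)^N (1 + e^β β N/Λ)^Λ. -/
open Real Filter

/-- Free canonical partition function of `N` Fermi particles in `[0,Λ]` with Dirichlet
boundary conditions: `Z_N^{(0)}(Λ) = Σ_{0<k_1<...<k_N} exp(−β Σ_i π²k_i²/Λ²)`. -/
noncomputable def freeZ (β Λ : ℝ) (N : ℕ) : ℝ :=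
  ∑' s : {s : Finset ℕ+ // s.card = N},
    Real.exp (-β * ∑ k ∈ s.1, π ^ 2 * (k : ℕ) ^ 2 / Λ ^ 2)

/-!
Write `a = βπ²/Λ²`. For `N` distinct positive integers, `k₁ + ⋯ + k_N ≥ N(N+1)/2` and
Cauchy–Schwarz give `Σ kᵢ² ≥ (N/2) Σ kᵢ`, so the Boltzmann factor `exp(-a Σ kᵢ²)` is at most
`∏ exp(-(aN/2) kᵢ)`. Summing over `N`-element sets gives at most `1/N!` times the `N`-th power
of the one-particle sum `Σ_{k ≥ 1} exp(-(aN/2) k) ≤ 2/(aN) = 2Λ²/(βπ²N)`, which is at most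
`Λ/β` as soon as `Λ ≤ N`. The factor `(1 + e^β βN/Λ)^Λ` is at least `1`.
-/

open Finset
open scoped Nat

section
variable {α R : Type*} [DecidableEq α] [CommSemiring R] [PartialOrder R] [IsOrderedRing R]

theorem Finset.succ_mul_sum_powersetCard_succ_prod_le (T : Finset α) (x : α → R)
    (hx : ∀ k ∈ T, 0 ≤ x k) (n : ℕ) :
    (n + 1 : R) * ∑ s ∈ T.powersetCard (n + 1), ∏ k ∈ s, x k ≤
      (∑ k ∈ T, x k) * ∑ t ∈ T.powersetCard n, ∏ k ∈ t, x k := by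
  have h_count : (n + 1 : R) * ∑ s ∈ T.powersetCard (n + 1), ∏ k ∈ s, x k
      = ∑ s ∈ T.powersetCard (n + 1), ∑ k ∈ s, x k * ∏ j ∈ s.erase k, x j := by
    rw [mul_sum]
    refine sum_congr rfl fun s hs => ?_
    rw [sum_congr rfl fun k hk => mul_prod_erase s x hk, sum_const,
      (mem_powersetCard.mp hs).2, nsmul_eq_mul]
    push_cast
    rfl
  have h_remove : ∑ s ∈ T.powersetCard (n + 1), ∑ k ∈ s, x k * ∏ j ∈ s.erase k, x j
      = ∑ t ∈ T.powersetCard n, ∑ k ∈ T \ t, x k * ∏ j ∈ t, x j := by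
    rw [sum_sigma', sum_sigma']
    refine sum_nbij' (fun p => ⟨p.1.erase p.2, p.2⟩) (fun p => ⟨insert p.2 p.1, p.2⟩)
      ?_ ?_ ?_ ?_ fun _ _ => rfl
    · rintro ⟨s, k⟩ h
      simp only [mem_sigma, mem_powersetCard, mem_sdiff] at h ⊢
      obtain ⟨⟨hsT, hcard⟩, hks⟩ := h
      exact ⟨⟨(erase_subset _ _).trans hsT, by rw [card_erase_of_mem hks, hcard]; rfl⟩,
        hsT hks, notMem_erase _ _⟩
    · rintro ⟨t, k⟩ h
      simp only [mem_sigma, mem_powersetCard, mem_sdiff] at h ⊢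
      obtain ⟨⟨htT, hcard⟩, hkT, hkt⟩ := h
      exact ⟨⟨insert_subset hkT htT, by rw [card_insert_of_notMem hkt, hcard]⟩,
        mem_insert_self _ _⟩
    · rintro ⟨s, k⟩ h
      simp only [mem_sigma] at h
      simp [insert_erase h.2]
    · rintro ⟨t, k⟩ h
      simp only [mem_sigma, mem_sdiff] at h
      simp [erase_insert h.2.2]
  rw [h_count, h_remove, mul_sum]
  refine sum_le_sum fun t ht => ?_
  rw [← sum_mul]
  refine mul_le_mul_of_nonneg_right ?_ (prod_nonneg fun j hj => hx j ?_)
  · exact sum_le_sum_of_subset_of_nonneg sdiff_subset fun k hk _ => hx k hk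
  · exact (mem_powersetCard.mp ht).1 hj

theorem Finset.factorial_mul_sum_powersetCard_prod_le (T : Finset α) (x : α → R)
    (hx : ∀ k ∈ T, 0 ≤ x k) (n : ℕ) :
    (n ! : R) * ∑ s ∈ T.powersetCard n, ∏ k ∈ s, x k ≤ (∑ k ∈ T, x k) ^ n := by
  induction n with
  | zero => simp
  | succ n ih =>
    calc ((n + 1)! : R) * ∑ s ∈ T.powersetCard (n + 1), ∏ k ∈ s, x k
        = n ! * ((n + 1 : R) * ∑ s ∈ T.powersetCard (n + 1), ∏ k ∈ s, x k) := by
          push_cast [Nat.factorial_succ]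
          ring
      _ ≤ n ! * ((∑ k ∈ T, x k) * ∑ t ∈ T.powersetCard n, ∏ k ∈ t, x k) := by
          exact mul_le_mul_of_nonneg_left (T.succ_mul_sum_powersetCard_succ_prod_le x hx n)
            (by positivity)
      _ = (∑ k ∈ T, x k) * (n ! * ∑ t ∈ T.powersetCard n, ∏ k ∈ t, x k) := by ring
      _ ≤ (∑ k ∈ T, x k) * (∑ k ∈ T, x k) ^ n := by
          gcongr
          exact sum_nonneg hx
      _ = (∑ k ∈ T, x k) ^ (n + 1) := by ring

theorem tsum_subtype_card_eq_le_of_sum_powersetCard_le {g : Finset α → ℝ} (hg : 0 ≤ g)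
    {n : ℕ} {C : ℝ}
    (h : ∀ T : Finset α, ∑ s ∈ T.powersetCard n, g s ≤ C) :
    ∑' s : {s : Finset α // #s = n}, g s ≤ C := by
  refine Real.tsum_le_of_sum_le (fun s => hg s) fun F => ?_
  calc ∑ s ∈ F, g s = ∑ s ∈ F.image Subtype.val, g s :=
        (sum_image fun p _ q _ h => Subtype.ext h).symm
    _ ≤ ∑ s ∈ (F.sup Subtype.val).powersetCard n, g s := by
        refine sum_le_sum_of_subset_of_nonneg ?_ fun s _ _ => hg s
        simp only [subset_iff, mem_image, mem_powersetCard]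
        rintro _ ⟨s, hs, rfl⟩
        exact ⟨le_sup (f := Subtype.val) hs, s.2⟩
    _ ≤ C := h _
end

theorem PNat.card_mul_card_add_one_le_two_mul_sum (s : Finset ℕ+) :
    #s * (#s + 1) ≤ 2 * ∑ k ∈ s, (k : ℕ) := by
  refine Finset.induction_on_max s (by simp) fun a s hlt ih => ?_
  have ha : a ∉ s := fun h => (hlt a h).false
  have h_card : #s + 1 ≤ a := by
    have h_sub : s ⊆ Ico 1 a := fun k hk => mem_Ico.mpr ⟨one_le, hlt k hk⟩
    have h_le := card_le_card h_sub
    rw [PNat.card_Ico, PNat.one_coe] at h_le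
    have := a.pos
    omega
  rw [card_insert_of_notMem ha, sum_insert ha]
  nlinarith

theorem PNat.card_mul_sum_le_two_mul_sum_sq (s : Finset ℕ+) :
    (#s : ℝ) * ∑ k ∈ s, (k : ℝ) ≤ 2 * ∑ k ∈ s, (k : ℝ) ^ 2 := by
  have h_gauss : (#s : ℝ) ^ 2 ≤ 2 * ∑ k ∈ s, (k : ℝ) := by
    have : (#s : ℝ) * (#s + 1) ≤ 2 * ∑ k ∈ s, (k : ℝ) := by
      exact_mod_cast PNat.card_mul_card_add_one_le_two_mul_sum s
    nlinarith
  have h_cs := sq_sum_le_card_mul_sum_sq (s := s) (f := fun k : ℕ+ => (k : ℝ))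
  have h_sum : 0 ≤ ∑ k ∈ s, (k : ℝ) := sum_nonneg fun k _ => by positivity
  rcases s.eq_empty_or_nonempty with rfl | hs
  · simp
  · have h_pos : (0 : ℝ) < #s := by exact_mod_cast hs.card_pos
    refine le_of_mul_le_mul_left ?_ h_pos
    nlinarith

theorem PNat.sum_exp_neg_mul_le_inv {b : ℝ} (hb : 0 < b) (T : Finset ℕ+) :
    ∑ k ∈ T, exp (-(b * k)) ≤ b⁻¹ := by
  set r := exp (-b) with hr_def
  have hr : r < 1 := exp_lt_one_iff.mpr (by linarith)
  have h_pow : ∀ k : ℕ, exp (-(b * k)) = r ^ k := fun k => by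
    rw [← exp_nat_mul]; ring_nf
  have h_summable : Summable fun k : ℕ+ => r ^ (k : ℕ) :=
    (summable_geometric_of_lt_one (exp_pos _).le hr).comp_injective PNat.coe_injective
  calc ∑ k ∈ T, exp (-(b * k)) = ∑ k ∈ T, r ^ (k : ℕ) := sum_congr rfl fun k _ => h_pow k
    _ ≤ ∑' k : ℕ+, r ^ (k : ℕ) := h_summable.sum_le_tsum T fun _ _ => by positivity
    _ = r * (1 - r)⁻¹ := by
        rw [tsum_pnat_eq_tsum_succ (f := fun k => r ^ k)]
        simp_rw [pow_succ' r]
        rw [tsum_mul_left, tsum_geometric_of_lt_one (exp_pos _).le hr]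
    _ = (exp b - 1)⁻¹ := by
        have h_exp : 1 < exp b := one_lt_exp_iff.mpr hb
        rw [hr_def, exp_neg]
        field_simp
    _ ≤ b⁻¹ := by
        gcongr
        linarith [add_one_le_exp b]

theorem freeZ_le_pow_div_factorial {β Λ : ℝ} (hβ : 0 < β) (hΛ : 0 < Λ) {N : ℕ} (hΛN : Λ ≤ N) :
    freeZ β Λ N ≤ (Λ / β) ^ N / N ! := by
  have hN : (0 : ℝ) < N := hΛ.trans_le hΛN
  set a := β * π ^ 2 / Λ ^ 2 with ha
  set b := a * N / 2 with hb_def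
  have hb : 0 < b := by positivity
  have h_weight : ∀ s : Finset ℕ+, #s = N →
      exp (-β * ∑ k ∈ s, π ^ 2 * (k : ℕ) ^ 2 / Λ ^ 2) ≤ ∏ k ∈ s, exp (-(b * k)) := by
    intro s hs
    have h_sq := PNat.card_mul_sum_le_two_mul_sum_sq s
    rw [hs] at h_sq
    rw [← exp_sum, exp_le_exp, ← sum_div, ← mul_sum, sum_neg_distrib, ← mul_sum]
    have ha0 : 0 ≤ a := by positivity
    calc -β * ((π ^ 2 * ∑ k ∈ s, ((k : ℕ) : ℝ) ^ 2) / Λ ^ 2)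
        = -(a * ∑ k ∈ s, ((k : ℕ) : ℝ) ^ 2) := by rw [ha]; ring
      _ ≤ -(a * ((N * ∑ k ∈ s, ((k : ℕ) : ℝ)) / 2)) := by gcongr; linarith
      _ = -(b * ∑ k ∈ s, ((k : ℕ) : ℝ)) := by rw [hb_def]; ring
  have h_rate : b⁻¹ ≤ Λ / β := by
    rw [← inv_div]
    refine inv_anti₀ (by positivity) ?_
    rw [div_le_iff₀ hΛ, hb_def, ha]
    field_simp
    have hπ : 2 ≤ π ^ 2 := by nlinarith [pi_gt_three]
    nlinarith
  rw [freeZ]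
  refine tsum_subtype_card_eq_le_of_sum_powersetCard_le
    (g := fun s : Finset ℕ+ => exp (-β * ∑ k ∈ s, π ^ 2 * (k : ℕ) ^ 2 / Λ ^ 2))
    (fun s => (exp_pos _).le) fun T => ?_
  calc ∑ s ∈ T.powersetCard N, exp (-β * ∑ k ∈ s, π ^ 2 * (k : ℕ) ^ 2 / Λ ^ 2)
      ≤ ∑ s ∈ T.powersetCard N, ∏ k ∈ s, exp (-(b * k)) :=
        sum_le_sum fun s hs => h_weight s (mem_powersetCard.mp hs).2
    _ ≤ (∑ k ∈ T, exp (-(b * k))) ^ N / N ! := by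
        rw [le_div_iff₀ (by positivity), mul_comm]
        exact T.factorial_mul_sum_powersetCard_prod_le _ (fun k _ => (exp_pos _).le) N
    _ ≤ b⁻¹ ^ N / N ! := by
        gcongr
        exact PNat.sum_exp_neg_mul_le_inv hb T
    _ ≤ (Λ / β) ^ N / N ! := by gcongr

theorem stmt_4_general (β Λ : ℝ) (hβ : 0 < β) (hΛ : 0 < Λ) (N : ℕ)
    (hNΛ : Λ < N) :
    freeZ β Λ N ≤
      (1 / (N.factorial : ℝ)) * (Λ / β) ^ N *
        (1 + Real.exp β * β * N / Λ) ^ (Λ : ℝ) := by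
  have h_one : 1 ≤ (1 + Real.exp β * β * N / Λ) ^ (Λ : ℝ) :=
    one_le_rpow (le_add_of_nonneg_right (by positivity)) hΛ.le
  calc freeZ β Λ N ≤ (Λ / β) ^ N / N ! := freeZ_le_pow_div_factorial hβ hΛ hNΛ.le
    _ = 1 / (N ! : ℝ) * (Λ / β) ^ N * 1 := by ring
    _ ≤ _ := by gcongr

/-- Lemma 2 of the paper: for `N > Λ`,
`Z_N^{(0)}(Λ) ≤ (1/N!) (Λ/β)^N (1 + e^β βN/Λ)^Λ`. -/
theorem stmt_4 (β Λ : ℝ) (hβ : 0 < β) (hΛ : 0 < Λ) (N : ℕ) (hN : 0 < N)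
    (hNΛ : Λ < N) :
    freeZ β Λ N ≤
      (1 / (N.factorial : ℝ)) * (Λ / β) ^ N *
        (1 + Real.exp β * β * N / Λ) ^ (Λ : ℝ) :=
  stmt_4_general β Λ hβ hΛ N hNΛ
end

section
/- Let β > 0, Λ > 0, let n be a positive integer and m a nonnegative integer. Then Σ_{m<k_1<k_2<...<k_n} exp(−(β/Λ) Σ_{i=1}^n k_i) ≤ e^{−βmn/Λ} (1/n!) (Λ/β)^n, the sum running over strictly increasing n-tuples of integers all greater than m. -/
open Real Filter

open scoped ENNReal

/-!
Removing the least element `m + 1 + l` of an `(n + 1)`-set of integers `> m` leaves an `n`-set of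
integers `> m + 1 + l`. With `q = e^{-β/Λ}` this gives, by induction on `n`, the exact value
`q^{mn} ∏_{k=1}^n q^k / (1 - q^k)` of the sum, and `q^k / (1 - q^k) = 1 / (e^{kβ/Λ} - 1) < Λ/(kβ)`.
-/

abbrev FinsetsAbove (n m : ℕ) : Type := {s : Finset ℕ // s.card = n ∧ ∀ k ∈ s, m < k}

namespace FinsetsAbove

lemma nonempty {n m : ℕ} (s : FinsetsAbove (n + 1) m) : s.1.Nonempty :=
  Finset.card_pos.mp (by omega)

lemma lt_min' {n m : ℕ} (s : FinsetsAbove (n + 1) m) : m < s.1.min' s.nonempty :=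
  s.2.2 _ (s.1.min'_mem _)

def equivSigma (n m : ℕ) : FinsetsAbove (n + 1) m ≃ Σ l : ℕ, FinsetsAbove n (m + 1 + l) where
  toFun s :=
    ⟨s.1.min' s.nonempty - (m + 1), s.1.erase (s.1.min' s.nonempty), by
      rw [Finset.card_erase_of_mem (s.1.min'_mem _), s.2.1]; rfl, fun k hk => by
      have := s.1.min'_lt_of_mem_erase_min' s.nonempty hk
      have := s.lt_min'
      omega⟩
  invFun p :=
    ⟨insert (m + 1 + p.1) p.2.1, by
      rw [Finset.card_insert_of_notMem fun h => (p.2.2.2 _ h).false, p.2.2.1], by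
      simp only [Finset.mem_insert, forall_eq_or_imp]
      exact ⟨by omega, fun k hk => (p.2.2.2 k hk).trans' (by omega)⟩⟩
  left_inv s := by
    have := s.lt_min'
    ext1
    simp only
    rw [Nat.add_sub_cancel' (by omega : m + 1 ≤ s.1.min' s.nonempty)]
    exact Finset.insert_erase (s.1.min'_mem _)
  right_inv := by
    rintro ⟨l, t, -, hlt⟩
    have hmin : (insert (m + 1 + l) t).min' (Finset.insert_nonempty _ _) = m + 1 + l :=
      (Finset.min'_eq_iff _ _ _).2 ⟨Finset.mem_insert_self _ _, by
        simp only [Finset.mem_insert, forall_eq_or_imp]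
        exact ⟨le_rfl, fun k hk => (hlt k hk).le⟩⟩
    have hl : (insert (m + 1 + l) t).min' (Finset.insert_nonempty _ _) - (m + 1) = l := by omega
    refine Sigma.ext hl ?_
    rw [Subtype.heq_iff_coe_eq fun _ => by dsimp only; rw [hl]]
    simp only [hmin]
    exact Finset.erase_insert fun h => (hlt _ h).false

lemma tsum_prod_pow_succ (q : ℝ≥0∞) (n m : ℕ) :
    ∑' s : FinsetsAbove (n + 1) m, ∏ k ∈ s.1, q ^ k =
      ∑' l : ℕ, q ^ (m + 1 + l) * ∑' t : FinsetsAbove n (m + 1 + l), ∏ k ∈ t.1, q ^ k := by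
  rw [← (equivSigma n m).symm.tsum_eq, ENNReal.tsum_sigma']
  refine tsum_congr fun l => ?_
  rw [← ENNReal.tsum_mul_left]
  refine tsum_congr fun t => ?_
  exact Finset.prod_insert fun h => (t.2.2 _ h).false

theorem tsum_prod_pow (q : ℝ≥0∞) (n m : ℕ) :
    ∑' s : FinsetsAbove n m, ∏ k ∈ s.1, q ^ k =
      q ^ (m * n) * ∏ k ∈ Finset.range n, q ^ (k + 1) * (1 - q ^ (k + 1))⁻¹ := by
  induction n generalizing m with
  | zero =>
    rw [tsum_eq_single ⟨∅, by simp⟩ fun s hs => absurd (Subtype.ext (Finset.card_eq_zero.1 s.2.1)) hs]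
    simp
  | succ n ih =>
    set P := ∏ k ∈ Finset.range n, q ^ (k + 1) * (1 - q ^ (k + 1))⁻¹
    calc ∑' s : FinsetsAbove (n + 1) m, ∏ k ∈ s.1, q ^ k
        = ∑' l : ℕ, q ^ (m + 1 + l) * (q ^ ((m + 1 + l) * n) * P) := by
          simp only [tsum_prod_pow_succ, ih]
      _ = ∑' l : ℕ, (q ^ (n + 1)) ^ l * (q ^ ((m + 1) * (n + 1)) * P) := by
          refine tsum_congr fun l => by ring
      _ = q ^ (m * (n + 1)) * (P * (q ^ (n + 1) * (1 - q ^ (n + 1))⁻¹)) := by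
          rw [ENNReal.tsum_mul_right, ENNReal.tsum_geometric,
            show (m + 1) * (n + 1) = m * (n + 1) + (n + 1) by ring, pow_add]
          ring
      _ = _ := by rw [Finset.prod_range_succ]

end FinsetsAbove

lemma exp_neg_mul_inv_one_sub_exp_neg_le {c : ℝ} (hc : 0 < c) :
    exp (-c) * (1 - exp (-c))⁻¹ ≤ c⁻¹ := by
  have hexp : exp (-c) * (1 - exp (-c))⁻¹ = (exp c - 1)⁻¹ := by
    rw [exp_neg]
    field_simp
  rw [hexp]
  exact inv_anti₀ hc (by linarith [add_one_lt_exp hc.ne'])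

lemma ofReal_exp_neg_pow_mul_inv_le {x : ℝ} (hx : 0 < x) {k : ℕ} (hk : k ≠ 0) :
    ENNReal.ofReal (exp (-x)) ^ k * (1 - ENNReal.ofReal (exp (-x)) ^ k)⁻¹ ≤
      ENNReal.ofReal (k * x)⁻¹ := by
  have hkx : 0 < k * x := by positivity
  have hpow : ENNReal.ofReal (exp (-x)) ^ k = ENNReal.ofReal (exp (-(k * x))) := by
    rw [← ENNReal.ofReal_pow (exp_pos _).le, ← exp_nat_mul, mul_neg]
  have hlt : exp (-(k * x)) < 1 := exp_lt_one_iff.2 (by linarith)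
  rw [hpow, ← ENNReal.ofReal_one, ← ENNReal.ofReal_sub _ (exp_pos _).le,
    ← ENNReal.ofReal_inv_of_pos (by linarith), ← ENNReal.ofReal_mul (exp_pos _).le]
  exact ENNReal.ofReal_le_ofReal (exp_neg_mul_inv_one_sub_exp_neg_le hkx)

lemma tsum_le_of_tsum_ofReal_le {α : Type*} {f : α → ℝ} (hf : ∀ a, 0 ≤ f a) {c : ℝ} (hc : 0 ≤ c)
    (h : ∑' a, ENNReal.ofReal (f a) ≤ ENNReal.ofReal c) : ∑' a, f a ≤ c := by
  calc ∑' a, f a = (∑' a, ENNReal.ofReal (f a)).toReal := by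
        rw [ENNReal.tsum_toReal_eq fun _ => ENNReal.ofReal_ne_top]
        simp only [ENNReal.toReal_ofReal (hf _)]
    _ ≤ (ENNReal.ofReal c).toReal := ENNReal.toReal_mono ENNReal.ofReal_ne_top h
    _ = c := ENNReal.toReal_ofReal hc

theorem tsum_exp_neg_mul_sum_le {x : ℝ} (hx : 0 < x) (n m : ℕ) :
    ∑' s : FinsetsAbove n m, exp (-x * ∑ k ∈ s.1, (k : ℝ)) ≤
      exp (-x * (m * n)) * (n.factorial * x ^ n)⁻¹ := by
  set q := ENNReal.ofReal (exp (-x))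
  have hterm (s : FinsetsAbove n m) :
      ENNReal.ofReal (exp (-x * ∑ k ∈ s.1, (k : ℝ))) = ∏ k ∈ s.1, q ^ k := by
    rw [Finset.mul_sum, exp_sum, ENNReal.ofReal_prod_of_nonneg fun _ _ => (exp_pos _).le]
    refine Finset.prod_congr rfl fun k _ => ?_
    rw [mul_comm, exp_nat_mul, ENNReal.ofReal_pow (exp_pos _).le]
  have hfactors : ∏ k ∈ Finset.range n, ENNReal.ofReal (((k + 1 : ℕ) : ℝ) * x)⁻¹ =
      ENNReal.ofReal (n.factorial * x ^ n)⁻¹ := by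
    rw [← ENNReal.ofReal_prod_of_nonneg fun _ _ => by positivity, Finset.prod_inv_distrib,
      Finset.prod_mul_distrib, Finset.prod_const, Finset.card_range, ← Nat.cast_prod,
      Finset.prod_range_add_one_eq_factorial]
  refine tsum_le_of_tsum_ofReal_le (fun _ => (exp_pos _).le) (by positivity) ?_
  calc _ = q ^ (m * n) * ∏ k ∈ Finset.range n, q ^ (k + 1) * (1 - q ^ (k + 1))⁻¹ := by
        simp only [hterm, FinsetsAbove.tsum_prod_pow]
    _ ≤ q ^ (m * n) * ∏ k ∈ Finset.range n, ENNReal.ofReal (((k + 1 : ℕ) : ℝ) * x)⁻¹ := by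
        gcongr with k
        exact ofReal_exp_neg_pow_mul_inv_le hx k.succ_ne_zero
    _ = _ := by
        rw [hfactors, ← ENNReal.ofReal_pow (exp_pos _).le, ← exp_nat_mul,
          ← ENNReal.ofReal_mul (exp_pos _).le]
        push_cast
        ring_nf

theorem stmt_5_general (β Λ : ℝ) (hβ : 0 < β) (hΛ : 0 < Λ) (n : ℕ) (m : ℕ) :
    (∑' s : {s : Finset ℕ // s.card = n ∧ ∀ k ∈ s, m < k},
        Real.exp (-(β / Λ) * ∑ k ∈ s.1, (k : ℝ))) ≤
      Real.exp (-(β * m * n) / Λ) * (1 / (n.factorial : ℝ)) * (Λ / β) ^ n := by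
  refine (tsum_exp_neg_mul_sum_le (div_pos hβ hΛ) n m).trans_eq ?_
  rw [mul_inv, ← inv_pow, inv_div]
  ring_nf

/-- Tail estimate: the sum over strictly increasing `n`-tuples of integers greater
than `m` of `exp(−(β/Λ) Σ k_i)` is at most `e^{−βmn/Λ} (1/n!) (Λ/β)^n`. -/
theorem stmt_5 (β Λ : ℝ) (hβ : 0 < β) (hΛ : 0 < Λ) (n : ℕ) (hn : 0 < n) (m : ℕ) :
    (∑' s : {s : Finset ℕ // s.card = n ∧ ∀ k ∈ s, m < k},
        Real.exp (-(β / Λ) * ∑ k ∈ s.1, (k : ℝ))) ≤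
      Real.exp (-(β * m * n) / Λ) * (1 / (n.factorial : ℝ)) * (Λ / β) ^ n :=
  stmt_5_general β Λ hβ hΛ n m
end

section
/- Let β > 0, let Λ > 0 and let N be a positive integer with N > Λ. Define Z_N^{(0)}(Λ) = Σ_{0<k_1<...<k_N} exp(−β Σ_{i=1}^N π²k_i²/Λ²). Then (ln Z_N^{(0)}(Λ))/N ≤ ln(Λ/N) + (Λ/N) ln(1 + e^β β N/Λ) − ln β + 1. -/
open Real Filter

/-!
The Boltzmann factor of a configuration is the product of the one-mode weights `w k`, so
`z ^ N Z_N ≤ ∏ₖ (1 + z w k)` for every fugacity `z > 0`. Take `z = e^β β N / Λ`. The at most `Λ`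
modes `k ≤ Λ` contribute at most `(1 + z) ^ Λ` to the product. For `k > Λ` the Gaussian weight
is dominated by a geometric one, which gives `∑_{k > Λ} z w k ≤ N`, so these modes contribute at
most `e ^ N`. Taking logarithms yields the bound, even with an extra `-β` on the right.
-/

open Finset

theorem sum_prod_le_of_forall_prod_one_add_le {α : Type*} [DecidableEq α] {a : α → ℝ}
    (ha : ∀ k, 0 ≤ a k) {B : ℝ} (hB : ∀ F : Finset α, ∏ k ∈ F, (1 + a k) ≤ B)
    (u : Finset (Finset α)) : ∑ s ∈ u, ∏ k ∈ s, a k ≤ B :=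
  calc ∑ s ∈ u, ∏ k ∈ s, a k ≤ ∑ s ∈ (u.sup id).powerset, ∏ k ∈ s, a k :=
        sum_le_sum_of_subset_of_nonneg (fun _ hs ↦ mem_powerset.2 (le_sup (f := id) hs))
          fun _ _ _ ↦ prod_nonneg fun k _ ↦ ha k
    _ = ∏ k ∈ u.sup id, (1 + a k) := (prod_one_add _).symm
    _ ≤ B := hB _

theorem prod_one_add_le_pow_card_mul_exp {α : Type*} {a : α → ℝ} (ha : ∀ k, 0 ≤ a k) {z : ℝ}
    (haz : ∀ k, a k ≤ z) (p : α → Prop) [DecidablePred p] (F : Finset α) :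
    ∏ k ∈ F, (1 + a k) ≤ (1 + z) ^ #{k ∈ F | p k} * exp (∑ k ∈ F with ¬p k, a k) := by
  rw [← prod_filter_mul_prod_filter_not F p]
  have hpos : ∀ k, 0 ≤ 1 + a k := fun k ↦ by linarith [ha k]
  calc (∏ k ∈ F with p k, (1 + a k)) * ∏ k ∈ F with ¬p k, (1 + a k)
      ≤ (∏ k ∈ F with p k, (1 + a k)) * exp (∑ k ∈ F with ¬p k, a k) :=
        mul_le_mul_of_nonneg_left (prod_one_add_le_exp_sum _ ha) (prod_nonneg fun k _ ↦ hpos k)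
    _ ≤ (1 + z) ^ #{k ∈ F | p k} * exp (∑ k ∈ F with ¬p k, a k) := by
        rw [← prod_const]
        gcongr
        · exact fun k _ ↦ hpos k
        · exact haz _

theorem card_filter_coe_le_le_floor (F : Finset ℕ+) (Λ : ℝ) :
    #(F.filter fun k : ℕ+ ↦ ((k : ℕ) : ℝ) ≤ Λ) ≤ ⌊Λ⌋₊ := by
  simpa using card_le_card_of_injOn (t := Icc 1 ⌊Λ⌋₊) (fun k : ℕ+ ↦ (k : ℕ))
    (fun k hk ↦ by
      simp only [coe_filter, Set.mem_ofPred_eq] at hk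
      simpa using ⟨k.pos, Nat.le_floor hk.2⟩)
    (fun p _ q _ h ↦ PNat.coe_injective h)

theorem sum_exp_neg_mul_pnat_le {t : ℝ} (ht : 0 < t) (G : Finset ℕ+) :
    ∑ k ∈ G, exp (-(t * (k : ℕ))) ≤ 1 / t := by
  set r := exp (-t)
  have hr1 : r < 1 := exp_lt_one_iff.2 (by linarith)
  have hgeom : HasSum (fun k : ℕ+ ↦ r ^ (k : ℕ)) (r * (1 - r)⁻¹) :=
    hasSum_pnat_iff_hasSum_succ.2 <| by
      simpa [pow_succ'] using (hasSum_geometric_of_lt_one (exp_pos _).le hr1).mul_left r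
  have hsum := sum_le_hasSum G (fun k _ ↦ by positivity) hgeom
  have hr : r * (1 + t) ≤ 1 := by
    calc r * (1 + t) ≤ r * exp t := by gcongr; linarith [add_one_le_exp t]
      _ = 1 := by rw [← exp_add]; simp
  calc ∑ k ∈ G, exp (-(t * (k : ℕ))) = ∑ k ∈ G, r ^ (k : ℕ) := by
        refine sum_congr rfl fun k _ ↦ ?_
        rw [← exp_nat_mul]; ring_nf
    _ ≤ r * (1 - r)⁻¹ := hsum
    _ ≤ 1 / t := by
        rw [← div_eq_mul_inv, div_le_div_iff₀ (by linarith) ht]; linarith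

noncomputable def boltzmannWeight (β Λ : ℝ) (k : ℕ+) : ℝ :=
  exp (-(β * π ^ 2 * ((k : ℕ) : ℝ) ^ 2 / Λ ^ 2))

section boltzmannWeight

variable {β Λ : ℝ}

theorem exp_neg_mul_sum_eq_prod_boltzmannWeight (s : Finset ℕ+) :
    exp (-β * ∑ k ∈ s, π ^ 2 * ((k : ℕ) : ℝ) ^ 2 / Λ ^ 2) = ∏ k ∈ s, boltzmannWeight β Λ k := by
  rw [mul_sum, exp_sum]
  exact prod_congr rfl fun k _ ↦ by rw [boltzmannWeight]; ring_nf

theorem boltzmannWeight_nonneg (k : ℕ+) : 0 ≤ boltzmannWeight β Λ k := (exp_pos _).le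

theorem boltzmannWeight_le_one (hβ : 0 ≤ β) (k : ℕ+) : boltzmannWeight β Λ k ≤ 1 :=
  exp_le_one_iff.2 <| neg_nonpos.2 <| by positivity

theorem boltzmannWeight_le_of_lt (hβ : 0 ≤ β) (hΛ : 0 < Λ) {k : ℕ+} (hk : Λ < (k : ℕ)) :
    boltzmannWeight β Λ k ≤
      exp (-(β * π ^ 2 / 2)) * exp (-(β * π ^ 2 / (2 * Λ) * (k : ℕ))) := by
  set u := ((k : ℕ) : ℝ) / Λ
  have hu : 1 < u := (one_lt_div hΛ).2 hk
  have hsq : (1 + u) / 2 ≤ u ^ 2 := by nlinarith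
  rw [boltzmannWeight, ← exp_add, exp_le_exp]
  have h := mul_le_mul_of_nonneg_left hsq (by positivity : 0 ≤ β * π ^ 2)
  simp only [u, div_pow] at h
  field_simp at h ⊢
  linarith

theorem sum_boltzmannWeight_le_of_lt (hβ : 0 < β) (hΛ : 0 < Λ) (G : Finset ℕ+)
    (hG : ∀ k ∈ G, Λ < (k : ℕ)) : ∑ k ∈ G, exp β * β / Λ * boltzmannWeight β Λ k ≤ 1 := by
  set t := β * π ^ 2 / (2 * Λ)
  have ht : 0 < t := by positivity
  have hπ : 2 ≤ π ^ 2 := by nlinarith [pi_gt_three]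
  have hexp : exp β * exp (-(β * π ^ 2 / 2)) ≤ 1 := by
    rw [← exp_add, exp_le_one_iff]; nlinarith
  calc ∑ k ∈ G, exp β * β / Λ * boltzmannWeight β Λ k
      ≤ ∑ k ∈ G, exp β * β / Λ * (exp (-(β * π ^ 2 / 2)) * exp (-(t * (k : ℕ)))) :=
        sum_le_sum fun k hk ↦ by gcongr; exact boltzmannWeight_le_of_lt hβ.le hΛ (hG k hk)
    _ = exp β * β / Λ * exp (-(β * π ^ 2 / 2)) * ∑ k ∈ G, exp (-(t * (k : ℕ))) := by
        rw [mul_sum]; exact sum_congr rfl fun k _ ↦ by ring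
    _ ≤ exp β * β / Λ * exp (-(β * π ^ 2 / 2)) * (1 / t) := by
        gcongr; exact sum_exp_neg_mul_pnat_le ht G
    _ = exp β * exp (-(β * π ^ 2 / 2)) * (2 / π ^ 2) := by
        simp only [t]; field_simp
    _ ≤ 1 * 1 := by
        gcongr; rw [div_le_one (by positivity)]; linarith
    _ = 1 := one_mul 1

theorem prod_one_add_mul_boltzmannWeight_le (hβ : 0 < β) (hΛ : 0 < Λ) {M : ℝ}
    (hM : 0 ≤ M) (F : Finset ℕ+) :
    ∏ k ∈ F, (1 + exp β * β * M / Λ * boltzmannWeight β Λ k) ≤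
      (1 + exp β * β * M / Λ) ^ Λ * exp M := by
  set z := exp β * β * M / Λ
  have hz : 0 ≤ z := by positivity
  have hcard : (1 + z) ^ #(F.filter fun k : ℕ+ ↦ ((k : ℕ) : ℝ) ≤ Λ) ≤ (1 + z) ^ Λ := by
    rw [← rpow_natCast]
    exact rpow_le_rpow_of_exponent_le (by linarith)
      (((Nat.cast_le.2 (card_filter_coe_le_le_floor F Λ)).trans (Nat.floor_le hΛ.le)))
  set high := F.filter fun k : ℕ+ ↦ ¬((k : ℕ) : ℝ) ≤ Λ
  have htail : ∑ k ∈ high, z * boltzmannWeight β Λ k ≤ M :=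
    calc ∑ k ∈ high, z * boltzmannWeight β Λ k
        = M * ∑ k ∈ high, exp β * β / Λ * boltzmannWeight β Λ k := by
          rw [mul_sum]; exact sum_congr rfl fun k _ ↦ by ring
      _ ≤ M * 1 := by
          gcongr
          exact sum_boltzmannWeight_le_of_lt hβ hΛ high fun k hk ↦ not_le.1 (mem_filter.1 hk).2
      _ = M := mul_one M
  calc ∏ k ∈ F, (1 + z * boltzmannWeight β Λ k)
      ≤ (1 + z) ^ #(F.filter fun k : ℕ+ ↦ ((k : ℕ) : ℝ) ≤ Λ) *
          exp (∑ k ∈ high, z * boltzmannWeight β Λ k) :=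
        prod_one_add_le_pow_card_mul_exp (fun k ↦ mul_nonneg hz (boltzmannWeight_nonneg k))
          (fun k ↦ mul_le_of_le_one_right hz (boltzmannWeight_le_one hβ.le k)) _ F
    _ ≤ (1 + z) ^ Λ * exp M := by gcongr

theorem sum_freeZ_terms_le {z B : ℝ} (hz : 0 < z)
    (hB : ∀ F : Finset ℕ+, ∏ k ∈ F, (1 + z * boltzmannWeight β Λ k) ≤ B) {N : ℕ}
    (u : Finset {s : Finset ℕ+ // s.card = N}) :
    ∑ s ∈ u, exp (-β * ∑ k ∈ s.1, π ^ 2 * ((k : ℕ) : ℝ) ^ 2 / Λ ^ 2) ≤ B / z ^ N := by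
  rw [le_div_iff₀ (pow_pos hz N), sum_mul]
  calc ∑ s ∈ u, exp (-β * ∑ k ∈ s.1, π ^ 2 * ((k : ℕ) : ℝ) ^ 2 / Λ ^ 2) * z ^ N
      = ∑ s ∈ u.map (Function.Embedding.subtype _), ∏ k ∈ s, z * boltzmannWeight β Λ k := by
        rw [sum_map]
        refine sum_congr rfl fun s _ ↦ ?_
        rw [Function.Embedding.subtype_apply, exp_neg_mul_sum_eq_prod_boltzmannWeight,
          prod_mul_distrib, prod_const, s.2, mul_comm]
    _ ≤ B := sum_prod_le_of_forall_prod_one_add_le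
        (fun k ↦ mul_nonneg hz.le (boltzmannWeight_nonneg k)) hB _

theorem summable_freeZ_terms (hβ : 0 < β) (hΛ : 0 < Λ) (N : ℕ) :
    Summable fun s : {s : Finset ℕ+ // s.card = N} ↦
      exp (-β * ∑ k ∈ s.1, π ^ 2 * ((k : ℕ) : ℝ) ^ 2 / Λ ^ 2) :=
  summable_of_sum_le (fun _ ↦ (exp_pos _).le) <|
    sum_freeZ_terms_le (by positivity) (prod_one_add_mul_boltzmannWeight_le hβ hΛ zero_le_one)

theorem freeZ_pos (hβ : 0 < β) (hΛ : 0 < Λ) (N : ℕ) : 0 < freeZ β Λ N :=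
  (summable_freeZ_terms hβ hΛ N).tsum_pos (fun _ ↦ (exp_pos _).le)
    ⟨(range N).map ⟨Nat.succPNat, Nat.succPNat_injective⟩, by simp⟩ (exp_pos _)

theorem freeZ_le (hβ : 0 < β) (hΛ : 0 < Λ) {N : ℕ} (hN : 0 < N) :
    freeZ β Λ N ≤
      (1 + exp β * β * N / Λ) ^ Λ * exp N / (exp β * β * N / Λ) ^ N :=
  Real.tsum_le_of_sum_le (fun _ ↦ (exp_pos _).le) <|
    sum_freeZ_terms_le (by positivity) <|
      prod_one_add_mul_boltzmannWeight_le hβ hΛ (Nat.cast_nonneg N)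

end boltzmannWeight

theorem stmt_6_general (β Λ : ℝ) (hβ : 0 < β) (hΛ : 0 < Λ) (N : ℕ) (hN : 0 < N) :
    Real.log (freeZ β Λ N) / N ≤
      Real.log (Λ / N) + (Λ / N) * Real.log (1 + Real.exp β * β * N / Λ)
        - Real.log β + 1 := by
  set z := exp β * β * N / Λ
  have hN' : (0 : ℝ) < N := Nat.cast_pos.2 hN
  have hlogz : log z = β + log β + log N - log Λ := by
    rw [log_div (by positivity) hΛ.ne', log_mul (by positivity) hN'.ne',
      log_mul (exp_pos β).ne' hβ.ne', log_exp]
  have hlogZ : log (freeZ β Λ N) ≤ Λ * log (1 + z) + N - N * log z := by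
    calc log (freeZ β Λ N) ≤ log ((1 + z) ^ Λ * exp N / z ^ N) :=
          log_le_log (freeZ_pos hβ hΛ N) (freeZ_le hβ hΛ hN)
      _ = Λ * log (1 + z) + N - N * log z := by
          rw [log_div (by positivity) (by positivity), log_mul (by positivity) (exp_pos _).ne',
            log_rpow (by positivity), log_exp, log_pow]
  rw [hlogz] at hlogZ
  rw [div_le_iff₀ hN', log_div hΛ.ne' hN'.ne']
  have hΛN : Λ / N * log (1 + z) * N = Λ * log (1 + z) := by field_simp
  nlinarith [mul_pos hN' hβ]

/-- For `N > Λ`: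
`(ln Z_N^{(0)}(Λ))/N ≤ ln(Λ/N) + (Λ/N) ln(1 + e^β βN/Λ) − ln β + 1`. -/
theorem stmt_6 (β Λ : ℝ) (hβ : 0 < β) (hΛ : 0 < Λ) (N : ℕ) (hN : 0 < N)
    (hNΛ : Λ < N) :
    Real.log (freeZ β Λ N) / N ≤
      Real.log (Λ / N) + (Λ / N) * Real.log (1 + Real.exp β * β * N / Λ)
        - Real.log β + 1 :=
  stmt_6_general β Λ hβ hΛ N hN
end

section
/- Let β > 0 and μ ∈ ℝ. Then lim_{Λ→∞} (1/Λ) Σ_{k=1}^∞ ln(1 + e^{β(μ − π²k²/Λ²)}) = (1/π) ∫_0^∞ ln(1 + e^{β(μ−p²)}) dp. -/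
/-!
With mesh `h = π / Λ` the sum is the right Riemann sum `h * ∑_{n ≥ 1} f (n h)` of
`f p = log (1 + exp (β (μ - p²)))`, which is decreasing on `[0, ∞)` and integrable (it is
dominated by the Gaussian `exp (β (μ - p²))`). For a decreasing function, comparing `f` on each
cell `[n h, (n + 1) h]` with its values at the endpoints traps `∫₀^∞ f` between
`h * ∑_{n ≥ 1} f (n h)` and `h * f 0 + h * ∑_{n ≥ 1} f (n h)`, so the Riemann sums converge to the
integral as `h → 0⁺`, i.e. as `Λ → ∞`.
-/

open Real Filter

open MeasureTheory Set Topology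

section RiemannSum

variable {f : ℝ → ℝ} {h : ℝ}

lemma AntitoneOn.comp_mul_left_Ici (hf : AntitoneOn f (Ici 0)) (hh : 0 ≤ h) :
    AntitoneOn (fun x => f (h * x)) (Ici 0) := fun _ ha _ hb hab =>
  hf (mul_nonneg hh ha) (mul_nonneg hh hb) (mul_le_mul_of_nonneg_left hab hh)

lemma AntitoneOn.mul_sum_range_le_intervalIntegral (hf : AntitoneOn f (Ici 0)) (hh : 0 < h)
    (n : ℕ) : h * ∑ i ∈ Finset.range n, f (h * (i + 1)) ≤ ∫ x in 0..h * n, f x := by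
  have hsum := ((hf.comp_mul_left_Ici hh.le).mono Icc_subset_Ici_self).sum_le_integral
    (x₀ := 0) (a := n)
  simp only [zero_add, Nat.cast_add, Nat.cast_one] at hsum
  rw [intervalIntegral.integral_comp_mul_left f hh.ne', mul_zero, smul_eq_mul] at hsum
  calc h * ∑ i ∈ Finset.range n, f (h * (i + 1)) ≤ h * (h⁻¹ * ∫ x in 0..h * n, f x) := by
        gcongr
    _ = ∫ x in 0..h * n, f x := by field_simp

lemma AntitoneOn.intervalIntegral_le_mul_sum_range (hf : AntitoneOn f (Ici 0)) (hh : 0 < h)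
    (n : ℕ) : ∫ x in 0..h * n, f x ≤ h * ∑ i ∈ Finset.range n, f (h * i) := by
  have hsum := ((hf.comp_mul_left_Ici hh.le).mono Icc_subset_Ici_self).integral_le_sum
    (x₀ := 0) (a := n)
  simp only [zero_add] at hsum
  rw [intervalIntegral.integral_comp_mul_left f hh.ne', mul_zero, smul_eq_mul] at hsum
  calc ∫ x in 0..h * n, f x = h * (h⁻¹ * ∫ x in 0..h * n, f x) := by field_simp
    _ ≤ h * ∑ i ∈ Finset.range n, f (h * i) := by gcongr

lemma AntitoneOn.mul_sum_range_le_integral_Ioi (hf : AntitoneOn f (Ici 0))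
    (hf₀ : ∀ x ∈ Ioi 0, 0 ≤ f x) (hfi : IntegrableOn f (Ioi 0)) (hh : 0 < h) (n : ℕ) :
    h * ∑ i ∈ Finset.range n, f (h * (i + 1)) ≤ ∫ x in Ioi 0, f x := by
  refine (hf.mul_sum_range_le_intervalIntegral hh n).trans ?_
  rw [intervalIntegral.integral_of_le (by positivity)]
  exact setIntegral_mono_set hfi (ae_restrict_of_forall_mem measurableSet_Ioi hf₀)
    Ioc_subset_Ioi_self.eventuallyLE

lemma AntitoneOn.summable_comp_mul_succ (hf : AntitoneOn f (Ici 0))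
    (hf₀ : ∀ x ∈ Ioi 0, 0 ≤ f x) (hfi : IntegrableOn f (Ioi 0)) (hh : 0 < h) :
    Summable fun n : ℕ => f (h * (n + 1)) := by
  refine summable_of_sum_range_le (c := h⁻¹ * ∫ x in Ioi 0, f x)
    (fun n => hf₀ _ (mem_Ioi.2 (by positivity))) fun n => ?_
  rw [le_inv_mul_iff₀ hh]
  exact hf.mul_sum_range_le_integral_Ioi hf₀ hfi hh n

lemma AntitoneOn.mul_tsum_le_integral_Ioi (hf : AntitoneOn f (Ici 0))
    (hf₀ : ∀ x ∈ Ioi 0, 0 ≤ f x) (hfi : IntegrableOn f (Ioi 0)) (hh : 0 < h) :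
    h * ∑' n : ℕ, f (h * (n + 1)) ≤ ∫ x in Ioi 0, f x := by
  rw [← tsum_mul_left]
  refine tsum_le_of_sum_range_le
    (fun n => mul_nonneg hh.le (hf₀ _ (mem_Ioi.2 (by positivity)))) fun n => ?_
  rw [← Finset.mul_sum]
  exact hf.mul_sum_range_le_integral_Ioi hf₀ hfi hh n

lemma AntitoneOn.integral_Ioi_le_mul_tsum (hf : AntitoneOn f (Ici 0))
    (hf₀ : ∀ x ∈ Ioi 0, 0 ≤ f x) (hfi : IntegrableOn f (Ioi 0)) (hh : 0 < h) :
    ∫ x in Ioi 0, f x ≤ h * f 0 + h * ∑' n : ℕ, f (h * (n + 1)) := by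
  have hpartial (n : ℕ) :
      ∫ x in 0..h * (n + 1 : ℕ), f x ≤ h * f 0 + h * ∑' n : ℕ, f (h * (n + 1)) := by
    refine (hf.intervalIntegral_le_mul_sum_range hh (n + 1)).trans ?_
    rw [Finset.sum_range_succ', Nat.cast_zero, mul_zero, mul_add, add_comm]
    gcongr
    push_cast
    exact (hf.summable_comp_mul_succ hf₀ hfi hh).sum_le_tsum _
      fun i _ => hf₀ _ (mem_Ioi.2 (by positivity))
  have hlim : Tendsto (fun n : ℕ => h * (n + 1 : ℕ)) atTop atTop :=
    (tendsto_natCast_atTop_atTop.comp (tendsto_add_atTop_nat 1)).const_mul_atTop hh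
  exact le_of_tendsto (intervalIntegral_tendsto_integral_Ioi 0 hfi hlim) (.of_forall hpartial)

theorem AntitoneOn.tendsto_mul_tsum_integral_Ioi (hf : AntitoneOn f (Ici 0))
    (hf₀ : ∀ x ∈ Ioi 0, 0 ≤ f x) (hfi : IntegrableOn f (Ioi 0)) :
    Tendsto (fun h => h * ∑' n : ℕ, f (h * (n + 1))) (𝓝[>] 0) (𝓝 (∫ x in Ioi 0, f x)) := by
  have hlower : Tendsto (fun h => (∫ x in Ioi 0, f x) - h * f 0) (𝓝[>] 0)
      (𝓝 (∫ x in Ioi 0, f x)) := by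
    have : Tendsto (fun h : ℝ => (∫ x in Ioi 0, f x) - h * f 0) (𝓝 0) (𝓝 (∫ x in Ioi 0, f x)) :=
      (continuous_const.sub (continuous_id.mul continuous_const)).tendsto' _ _ (by simp)
    exact this.mono_left nhdsWithin_le_nhds
  refine tendsto_of_tendsto_of_tendsto_of_le_of_le' hlower tendsto_const_nhds ?_ ?_
  · filter_upwards [self_mem_nhdsWithin] with h hh
    linarith [hf.integral_Ioi_le_mul_tsum hf₀ hfi hh]
  · filter_upwards [self_mem_nhdsWithin] with h hh
    exact hf.mul_tsum_le_integral_Ioi hf₀ hfi hh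

end RiemannSum

lemma Real.log_one_add_exp_le_exp_s16 (x : ℝ) : log (1 + exp x) ≤ exp x := by
  linarith [log_le_sub_one_of_pos (by positivity : 0 < 1 + exp x)]

lemma antitoneOn_log_one_add_exp_mul_sub_sq {β : ℝ} (hβ : 0 ≤ β) (μ : ℝ) :
    AntitoneOn (fun p : ℝ => log (1 + exp (β * (μ - p ^ 2)))) (Ici 0) := by
  intro a ha b _ hab
  have hsq : a ^ 2 ≤ b ^ 2 := pow_le_pow_left₀ ha hab 2
  dsimp only
  gcongr

lemma integrable_log_one_add_exp_mul_sub_sq {β : ℝ} (hβ : 0 < β) (μ : ℝ) :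
    Integrable fun p : ℝ => log (1 + exp (β * (μ - p ^ 2))) := by
  refine ((integrable_exp_neg_mul_sq hβ).const_mul (exp (β * μ))).mono'
    (Measurable.aestronglyMeasurable (by fun_prop)) (.of_forall fun p => ?_)
  rw [norm_of_nonneg (log_nonneg (by simp [(exp_pos _).le])), ← exp_add]
  convert log_one_add_exp_le_exp_s16 _ using 2
  ring

/-- Thermodynamic limit of the free Fermi gas pressure:
`lim_{Λ→∞} (1/Λ) Σ_{k=1}^∞ ln(1 + e^{β(μ−π²k²/Λ²)}) = (1/π) ∫_0^∞ ln(1 + e^{β(μ−p²)}) dp`. -/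
theorem stmt_16 (β μ : ℝ) (hβ : 0 < β) :
    Tendsto (fun Λ : ℝ =>
        (1 / Λ) * ∑' k : ℕ+, Real.log (1 + Real.exp (β * (μ - π ^ 2 * (k : ℕ) ^ 2 / Λ ^ 2))))
      atTop
      (nhds ((1 / π) * ∫ p in Set.Ioi (0 : ℝ), Real.log (1 + Real.exp (β * (μ - p ^ 2))))) := by
  have hmesh : Tendsto (fun Λ : ℝ => π / Λ) atTop (𝓝[>] 0) :=
    tendsto_nhdsWithin_of_tendsto_nhds_of_eventually_within _
      (tendsto_const_nhds.div_atTop tendsto_id)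
      ((eventually_gt_atTop 0).mono fun Λ hΛ => div_pos pi_pos hΛ)
  have hriemann := ((antitoneOn_log_one_add_exp_mul_sub_sq hβ.le μ).tendsto_mul_tsum_integral_Ioi
    (fun p _ => log_nonneg (by simp [(exp_pos _).le]))
    (integrable_log_one_add_exp_mul_sub_sq hβ μ).integrableOn).comp hmesh
  refine (hriemann.const_mul (1 / π)).congr' ?_
  filter_upwards [eventually_gt_atTop 0] with Λ hΛ
  rw [tsum_pnat_eq_tsum_succ (f := fun k : ℕ => log (1 + exp (β * (μ - π ^ 2 * k ^ 2 / Λ ^ 2))))]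
  simp only [Function.comp_apply, Nat.cast_add, Nat.cast_one]
  rw [← mul_assoc, one_div_mul_eq_div, div_div_cancel_left' pi_pos.ne', one_div]
  congr 1
  exact tsum_congr fun n => by ring_nf
end
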